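/- arXiv:1504.04092 — 5 statements merged into one kernel-verified Lean document; each statement's English description precedes it below -/
import Mathlib

section
/- (One-shot mutual covering lemma.) Fix a joint distribution P_{UV} on U × V with marginals P_U, P_V, and suppose P_{V|U=u} is absolutely continuous with respect to P_V for P_U-a.e. u, with information density ı_{U;V}(u;v) = log (dP_{V|U=u}/dP_V)(v). Let U₁,…,U_M be i.i.d. P_U and V₁,…,V_L be i.i.d. P_V, with all M + L variables mutually independent. Then for every measurable set F ⊆ U × V and all δ, γ > 0: P[∩_{m=1}^{M} ∩_{l=1}^{L} {(U_m,V_l) ∉ F}] ≤ P[(U,V) ∉ F] + P[exp(ı_{U;V}(U;V)) > M·L·exp(−γ) − δ] + (min{M,L} − 1)/δ + exp(−exp(γ)), where (U,V) ∼ P_{UV}. -/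
/-!
Write `e = exp ı` for the density of `P_{UV}` with respect to `P_U ⊗ P_V`, and assume `M ≤ L`
(otherwise exchange the roles of `U` and `V`). Fix the codebook `u = (u₁, …, u_M)` and the
`P_V`-density `g = M⁻¹ ∑ₘ e(uₘ, ·)`. On the set `D` of points `v` that are covered by some `uₘ`
and satisfy `∑ₘ e(uₘ, v) ≤ M L e^{-γ}` we have `g ≤ L e^{-γ}`, so `P_V(D) ≥ e^γ L⁻¹ ∫_D g` and,
by convexity of `exp`, `P_V(Dᶜ)^L ≤ exp(-e^γ ∫_D g) ≤ ∫_{Dᶜ} g + exp(-e^γ)`. A point `v ∉ D`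
is bad for the codeword `uₘ` because `(uₘ, v) ∉ F`, or `e(uₘ, v)` exceeds `M L e^{-γ} - δ`, or the
other codewords contribute at least `δ` to the sum. Averaged over the codebook, the first two
events cost `P_{UV}(Fᶜ)` and `P_{UV}[e > M L e^{-γ} - δ]`, and Markov's inequality bounds the third
by `(M - 1)/δ`, because `E[e(U_{m'}, V) e(U_m, V)] = 1` for independent `U_m, U_{m'}`.
-/

open MeasureTheory ProbabilityTheory Set
open scoped ENNReal

theorem Real.one_sub_pow_le_one_sub_add_exp_neg {x a b : ℝ} {L : ℕ} (hx : x ≤ 1)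
    (ha₀ : 0 ≤ a) (ha₁ : a ≤ 1) (hab : b * a ≤ L * x) :
    (1 - x) ^ L ≤ 1 - a + Real.exp (-b) := by
  have hconvex : Real.exp (-(b * a)) ≤ (1 - a) + a * Real.exp (-b) := by
    have := convexOn_exp.2 (mem_univ 0) (mem_univ (-b)) (sub_nonneg.2 ha₁) ha₀ (by ring)
    simpa [smul_eq_mul, mul_comm a b] using this
  calc (1 - x) ^ L ≤ Real.exp (-x) ^ L :=
        pow_le_pow_left₀ (sub_nonneg.2 hx) (Real.one_sub_le_exp_neg x) L
    _ = Real.exp (-(L * x)) := by rw [← Real.exp_nat_mul]; ring_nf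
    _ ≤ Real.exp (-(b * a)) := Real.exp_le_exp.2 (by linarith)
    _ ≤ 1 - a + Real.exp (-b) := by nlinarith [Real.exp_pos (-b)]

theorem measure_compl_pow_le_setLIntegral_compl_add {β : Type*} [MeasurableSpace β]
    {μ : Measure β} [IsProbabilityMeasure μ] {g : β → ℝ≥0∞} (hg : ∫⁻ v, g v ∂μ = 1)
    {s : Set β} (hs : MeasurableSet s) {L : ℕ} {b : ℝ} (hb : 0 ≤ b)
    (hgs : ∀ v ∈ s, ENNReal.ofReal b * g v ≤ L) :
    μ sᶜ ^ L ≤ ∫⁻ v in sᶜ, g v ∂μ + ENNReal.ofReal (Real.exp (-b)) := by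
  have hsplit : ∫⁻ v in s, g v ∂μ + ∫⁻ v in sᶜ, g v ∂μ = 1 := (lintegral_add_compl g hs).trans hg
  have hin_le : ∫⁻ v in s, g v ∂μ ≤ 1 := hsplit ▸ le_self_add
  have hmass : ENNReal.ofReal b * ∫⁻ v in s, g v ∂μ ≤ L * μ s := by
    rw [← lintegral_const_mul' _ _ ENNReal.ofReal_ne_top, ← setLIntegral_const]
    exact setLIntegral_mono' hs hgs
  set a := (∫⁻ v in s, g v ∂μ).toReal
  set x := (μ s).toReal
  have hout : ∫⁻ v in sᶜ, g v ∂μ = ENNReal.ofReal (1 - a) := by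
    rw [ENNReal.ofReal_sub _ ENNReal.toReal_nonneg, ENNReal.ofReal_one,
      ENNReal.ofReal_toReal (ne_top_of_le_ne_top ENNReal.one_ne_top hin_le), ← hsplit,
      ENNReal.add_sub_cancel_left (ne_top_of_le_ne_top ENNReal.one_ne_top hin_le)]
  have hcompl : μ sᶜ = ENNReal.ofReal (1 - x) := by
    rw [prob_compl_eq_one_sub hs, ENNReal.ofReal_sub _ ENNReal.toReal_nonneg, ENNReal.ofReal_one,
      ENNReal.ofReal_toReal (measure_ne_top μ s)]
  have hab : b * a ≤ L * x := by
    have := ENNReal.toReal_mono (by finiteness) hmass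
    rwa [ENNReal.toReal_mul, ENNReal.toReal_mul, ENNReal.toReal_ofReal hb,
      ENNReal.toReal_natCast] at this
  have hx : x ≤ 1 := ENNReal.toReal_le_of_le_ofReal zero_le_one (by simpa using prob_le_one)
  have ha : a ≤ 1 := ENNReal.toReal_le_of_le_ofReal zero_le_one (by simpa using hin_le)
  rw [hout, hcompl, ← ENNReal.ofReal_pow (by linarith), ← ENNReal.ofReal_add (by linarith)
    (Real.exp_nonneg _)]
  exact ENNReal.ofReal_le_ofReal
    (Real.one_sub_pow_le_one_sub_add_exp_neg hx ENNReal.toReal_nonneg ha hab)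

theorem lintegral_mul_eval_eval {ι α : Type*} [Fintype ι] [MeasurableSpace α] {μ : Measure α}
    [IsProbabilityMeasure μ] {i j : ι} (hij : i ≠ j) {f g : α → ℝ≥0∞} (hf : Measurable f)
    (hg : Measurable g) :
    ∫⁻ x, f (x i) * g (x j) ∂Measure.pi (fun _ => μ) = (∫⁻ a, f a ∂μ) * ∫⁻ a, g a ∂μ := by
  have hindep : IndepFun (fun x : ι → α => x i) (fun x => x j) (Measure.pi fun _ => μ) :=
    (iIndepFun_pi (X := fun _ => id) fun _ => aemeasurable_id).indepFun hij
  refine (lintegral_mul_eq_lintegral_mul_lintegral_of_indepFun'' (f := fun x : ι → α => f (x i))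
    (g := fun x : ι → α => g (x j)) (hf.comp (measurable_pi_apply i)).aemeasurable
    (hg.comp (measurable_pi_apply j)).aemeasurable (hindep.comp hf hg)).trans ?_
  rw [(measurePreserving_eval _ i).lintegral_comp hf,
    (measurePreserving_eval _ j).lintegral_comp hg]

theorem MeasureTheory.Measure.compProd_eq_prod_withDensity {α β : Type*} [MeasurableSpace α]
    [MeasurableSpace β]
    {μ : Measure α} [SFinite μ] {ν : Measure β} [SFinite ν] {κ : Kernel α β} [IsSFiniteKernel κ]
    {f : α × β → ℝ≥0∞} (hf : Measurable f)
    (hκ : ∀ᵐ a ∂μ, κ a = ν.withDensity fun b => f (a, b)) :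
    μ ⊗ₘ κ = (μ.prod ν).withDensity f := by
  ext s hs
  rw [Measure.compProd_apply hs, withDensity_apply _ hs, ← lintegral_indicator hs,
    lintegral_prod _ (hf.indicator hs).aemeasurable]
  refine lintegral_congr_ae ?_
  filter_upwards [hκ] with a ha
  rw [ha, withDensity_apply _ (measurable_prodMk_left hs),
    ← lintegral_indicator (measurable_prodMk_left hs)]
  rfl

theorem MeasureTheory.Measure.map_snd_prod_withDensity {α β : Type*} [MeasurableSpace α]
    [MeasurableSpace β]
    {μ : Measure α} [SFinite μ] {ν : Measure β} [SFinite ν] {f : α × β → ℝ≥0∞}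
    (hf : Measurable f) :
    ((μ.prod ν).withDensity f).map Prod.snd = ν.withDensity fun b => ∫⁻ a, f (a, b) ∂μ := by
  ext s hs
  rw [Measure.map_apply measurable_snd hs, withDensity_apply _ (measurable_snd hs),
    withDensity_apply _ hs, ← univ_prod, ← Measure.prod_restrict, Measure.restrict_univ,
    lintegral_prod_symm _ hf.aemeasurable]

theorem MeasureTheory.Measure.prod_withDensity_comp_swap_apply {α β : Type*} [MeasurableSpace α]
    [MeasurableSpace β] {μ : Measure α} [SFinite μ] {ν : Measure β} [SFinite ν]
    (f : α × β → ℝ≥0∞) (s : Set (α × β)) :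
    (ν.prod μ).withDensity (f ∘ Prod.swap) (Prod.swap ⁻¹' s) = (μ.prod ν).withDensity f s := by
  rw [withDensity_apply', withDensity_apply']
  exact Measure.measurePreserving_swap.setLIntegral_comp_preimage_emb
    MeasurableEquiv.prodComm.measurableEmbedding f s

section Covering

variable {𝓤 𝓥 : Type*}

/-- The last term is the Markov bound for the event `δ ≤ ∑ m' ≠ m, e (u m', v)`, weighted by
`e (u m, v)`. -/
noncomputable def coveringErrorDensity (e : 𝓤 × 𝓥 → ℝ≥0∞) (F : Set (𝓤 × 𝓥)) (θ δ : ℝ≥0∞) {M : ℕ}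
    (u : Fin M → 𝓤) (m : Fin M) (v : 𝓥) : ℝ≥0∞ :=
  Fᶜ.indicator e (u m, v) + {p | θ < e p}.indicator e (u m, v)
    + δ⁻¹ * ∑ m' ∈ Finset.univ.erase m, e (u m', v) * e (u m, v)

variable {e : 𝓤 × 𝓥 → ℝ≥0∞} {F : Set (𝓤 × 𝓥)} {θ δ : ℝ≥0∞} {M L : ℕ}

theorem le_coveringErrorDensity (hδ₀ : δ ≠ 0) (hδ : δ ≠ ∞) {u : Fin M → 𝓤} {m : Fin M} {v : 𝓥}
    (hmiss : (u m, v) ∉ F ∨ θ + δ < ∑ m', e (u m', v)) :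
    e (u m, v) ≤ coveringErrorDensity e F θ δ u m v := by
  unfold coveringErrorDensity
  by_cases hF : (u m, v) ∈ Fᶜ
  · exact le_add_right (le_add_right (indicator_of_mem hF e).ge)
  by_cases hθ : θ < e (u m, v)
  · exact le_add_right (le_add_left (indicator_of_mem (s := {p | θ < e p}) hθ e).ge)
  have hrest : δ ≤ ∑ m' ∈ Finset.univ.erase m, e (u m', v) := by
    refine le_of_not_gt fun hlt => (hmiss.resolve_left hF).not_ge ?_
    rw [← Finset.add_sum_erase _ _ (Finset.mem_univ m)]
    exact add_le_add (le_of_not_gt hθ) hlt.le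
  calc e (u m, v) = δ⁻¹ * δ * e (u m, v) := by rw [ENNReal.inv_mul_cancel hδ₀ hδ, one_mul]
    _ ≤ δ⁻¹ * (∑ m' ∈ Finset.univ.erase m, e (u m', v)) * e (u m, v) := by gcongr
    _ ≤ _ := by rw [mul_assoc, Finset.sum_mul]; exact le_add_left le_rfl

variable [MeasurableSpace 𝓤] [MeasurableSpace 𝓥] {μU : Measure 𝓤} {μV : Measure 𝓥}
  [IsProbabilityMeasure μU] [IsProbabilityMeasure μV]

theorem measurable_coveringErrorDensity (he : Measurable e) (hF : MeasurableSet F) (m : Fin M) :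
    Measurable fun q : (Fin M → 𝓤) × 𝓥 => coveringErrorDensity e F θ δ q.1 m q.2 := by
  unfold coveringErrorDensity
  have := he.indicator hF.compl
  have := he.indicator (measurableSet_lt (measurable_const (a := θ)) he)
  fun_prop

theorem measure_forall_notMem_pow_le
    (he : Measurable e) (hF : MeasurableSet F) (hM : M ≠ 0) {b : ℝ} (hb : 0 ≤ b)
    (hθδ : ENNReal.ofReal b * (θ + δ) ≤ M * L) (hδ₀ : δ ≠ 0) (hδ : δ ≠ ∞) {u : Fin M → 𝓤}
    (hu : ∀ m, ∫⁻ v, e (u m, v) ∂μV = 1) :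
    μV {v | ∀ m, (u m, v) ∉ F} ^ L
      ≤ (M : ℝ≥0∞)⁻¹ * ∑ m, ∫⁻ v, coveringErrorDensity e F θ δ u m v ∂μV
        + ENNReal.ofReal (Real.exp (-b)) := by
  set s := {v | (∃ m, (u m, v) ∈ F) ∧ ∑ m, e (u m, v) ≤ θ + δ}
  have hs : MeasurableSet s := by
    have hhit : MeasurableSet {v | ∃ m, (u m, v) ∈ F} := by
      simp_rw [ofPred_exists]
      exact .iUnion fun m => hF.preimage measurable_prodMk_left
    have hsum : Measurable fun v => ∑ m, e (u m, v) := by fun_prop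
    exact hhit.inter (measurableSet_le hsum measurable_const)
  have hMinv : (M : ℝ≥0∞)⁻¹ * M = 1 := ENNReal.inv_mul_cancel (by exact_mod_cast hM) (by simp)
  have hdens : ∫⁻ v, (M : ℝ≥0∞)⁻¹ * ∑ m, e (u m, v) ∂μV = 1 := by
    rw [lintegral_const_mul _ (by fun_prop), lintegral_finsetSum _ (fun m _ => by fun_prop)]
    simp [hu, hMinv]
  have hbound : ∀ v ∈ s, ENNReal.ofReal b * ((M : ℝ≥0∞)⁻¹ * ∑ m, e (u m, v)) ≤ L := by
    intro v hv
    calc ENNReal.ofReal b * ((M : ℝ≥0∞)⁻¹ * ∑ m, e (u m, v))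
        ≤ (M : ℝ≥0∞)⁻¹ * (ENNReal.ofReal b * (θ + δ)) := by
          rw [mul_left_comm]; gcongr; exact hv.2
      _ ≤ (M : ℝ≥0∞)⁻¹ * (M * L) := by gcongr
      _ = L := by rw [← mul_assoc, hMinv, one_mul]
  have hmiss : ∀ m, ∀ v ∈ sᶜ, e (u m, v) ≤ coveringErrorDensity e F θ δ u m v := by
    intro m v hv
    refine le_coveringErrorDensity hδ₀ hδ ?_
    by_contra! h
    exact hv ⟨⟨m, h.1⟩, h.2⟩
  calc μV {v | ∀ m, (u m, v) ∉ F} ^ L ≤ μV sᶜ ^ L := by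
        gcongr
        intro v hv ⟨⟨m, hm⟩, _⟩
        exact hv m hm
    _ ≤ ∫⁻ v in sᶜ, (M : ℝ≥0∞)⁻¹ * ∑ m, e (u m, v) ∂μV + ENNReal.ofReal (Real.exp (-b)) :=
        measure_compl_pow_le_setLIntegral_compl_add hdens hs hb hbound
    _ ≤ _ := by
        gcongr
        rw [lintegral_const_mul _ (by fun_prop), lintegral_finsetSum _ (fun m _ => by fun_prop)]
        refine mul_le_mul_right (Finset.sum_le_sum fun m _ => ?_) _
        exact (setLIntegral_mono' hs.compl (hmiss m)).trans (setLIntegral_le_lintegral _ _)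

theorem lintegral_lintegral_indicator_eval {ι : Type*} [Fintype ι] (he : Measurable e)
    {s : Set (𝓤 × 𝓥)} (hs : MeasurableSet s) (i : ι) :
    ∫⁻ u, ∫⁻ v, s.indicator e (u i, v) ∂μV ∂Measure.pi (fun _ => μU)
      = (μU.prod μV).withDensity e s := by
  rw [withDensity_apply _ hs, ← lintegral_indicator hs, lintegral_prod _ (by fun_prop)]
  exact (measurePreserving_eval (fun _ => μU) i).lintegral_comp
    (f := fun x => ∫⁻ v, s.indicator e (x, v) ∂μV) (he.indicator hs).lintegral_prod_right'

theorem lintegral_lintegral_mul_eval_eval {ι : Type*} [Fintype ι] (he : Measurable e)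
    (hV : ∀ᵐ v ∂μV, ∫⁻ u, e (u, v) ∂μU = 1) {i j : ι} (hij : i ≠ j) :
    ∫⁻ u, ∫⁻ v, e (u i, v) * e (u j, v) ∂μV ∂Measure.pi (fun _ => μU) = 1 := by
  rw [lintegral_lintegral_swap (by fun_prop)]
  calc ∫⁻ v, ∫⁻ u, e (u i, v) * e (u j, v) ∂Measure.pi (fun _ => μU) ∂μV = ∫⁻ _, 1 ∂μV := by
        refine lintegral_congr_ae ?_
        filter_upwards [hV] with v hv
        rw [lintegral_mul_eval_eval (f := fun u => e (u, v)) (g := fun u => e (u, v)) hij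
          (by fun_prop) (by fun_prop), hv, one_mul]
    _ = 1 := by simp

theorem lintegral_lintegral_coveringErrorDensity (he : Measurable e) (hF : MeasurableSet F)
    (hV : ∀ᵐ v ∂μV, ∫⁻ u, e (u, v) ∂μU = 1) (m : Fin M) :
    ∫⁻ u, ∫⁻ v, coveringErrorDensity e F θ δ u m v ∂μV ∂Measure.pi (fun _ => μU)
      = (μU.prod μV).withDensity e Fᶜ + (μU.prod μV).withDensity e {p | θ < e p}
        + δ⁻¹ * (M - 1 : ℕ) := by
  have hT : MeasurableSet {p | θ < e p} := measurableSet_lt measurable_const he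
  have := he.indicator hF.compl
  have := he.indicator hT
  unfold coveringErrorDensity
  calc _ = ∫⁻ u, (∫⁻ v, Fᶜ.indicator e (u m, v) ∂μV + ∫⁻ v, {p | θ < e p}.indicator e (u m, v) ∂μV
        + δ⁻¹ * ∑ m' ∈ Finset.univ.erase m, ∫⁻ v, e (u m', v) * e (u m, v) ∂μV)
          ∂Measure.pi (fun _ => μU) := by
        refine lintegral_congr fun u => ?_
        rw [lintegral_add_left (by fun_prop), lintegral_add_left (by fun_prop),
          lintegral_const_mul _ (by fun_prop), lintegral_finsetSum _ fun _ _ => by fun_prop]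
    _ = ∫⁻ u, ∫⁻ v, Fᶜ.indicator e (u m, v) ∂μV ∂Measure.pi (fun _ => μU)
        + ∫⁻ u, ∫⁻ v, {p | θ < e p}.indicator e (u m, v) ∂μV ∂Measure.pi (fun _ => μU)
        + δ⁻¹ * ∑ m' ∈ Finset.univ.erase m,
            ∫⁻ u, ∫⁻ v, e (u m', v) * e (u m, v) ∂μV ∂Measure.pi (fun _ => μU) := by
        rw [lintegral_add_left (by fun_prop), lintegral_add_left (by fun_prop),
          lintegral_const_mul _ (by fun_prop), lintegral_finsetSum _ fun _ _ => by fun_prop]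
    _ = _ := by
        rw [lintegral_lintegral_indicator_eval he hF.compl,
          lintegral_lintegral_indicator_eval he hT,
          Finset.sum_congr rfl fun m' hm' =>
            lintegral_lintegral_mul_eval_eval he hV (Finset.ne_of_mem_erase hm'),
          Finset.sum_const, Finset.card_erase_of_mem (Finset.mem_univ m), Finset.card_univ,
          Fintype.card_fin, nsmul_eq_mul, mul_one]

theorem isProbabilityMeasure_prod_withDensity (he : Measurable e)
    (hU : ∀ᵐ u ∂μU, ∫⁻ v, e (u, v) ∂μV = 1) :
    IsProbabilityMeasure ((μU.prod μV).withDensity e) := by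
  constructor
  rw [withDensity_apply _ .univ, Measure.restrict_univ, lintegral_prod _ he.aemeasurable,
    lintegral_congr_ae hU, lintegral_one, measure_univ]

theorem measurableSet_forall_forall_notMem (hF : MeasurableSet F) :
    MeasurableSet {p : (Fin M → 𝓤) × (Fin L → 𝓥) | ∀ m l, (p.1 m, p.2 l) ∉ F} := by
  simp_rw [ofPred_forall]
  exact .iInter fun m => .iInter fun l => hF.compl.preimage (by fun_prop)

theorem measure_forall_forall_notMem_le (he : Measurable e) (hF : MeasurableSet F)
    (hU : ∀ᵐ u ∂μU, ∫⁻ v, e (u, v) ∂μV = 1) (hV : ∀ᵐ v ∂μV, ∫⁻ u, e (u, v) ∂μU = 1)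
    (hM : M ≠ 0) {b : ℝ} (hb : 0 ≤ b) (hθδ : ENNReal.ofReal b * (θ + δ) ≤ M * L)
    (hδ₀ : δ ≠ 0) (hδ : δ ≠ ∞) :
    (Measure.pi fun _ : Fin M => μU).prod (Measure.pi fun _ : Fin L => μV)
        {p | ∀ m l, (p.1 m, p.2 l) ∉ F}
      ≤ (μU.prod μV).withDensity e Fᶜ + (μU.prod μV).withDensity e {p | θ < e p}
        + δ⁻¹ * (M - 1 : ℕ) + ENNReal.ofReal (Real.exp (-b)) := by
  have hsection : ∀ u : Fin M → 𝓤,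
      Measure.pi (fun _ : Fin L => μV) (Prod.mk u ⁻¹' {p | ∀ m l, (p.1 m, p.2 l) ∉ F})
        = μV {v | ∀ m, (u m, v) ∉ F} ^ L := by
    intro u
    rw [show Prod.mk u ⁻¹' {p : (Fin M → 𝓤) × (Fin L → 𝓥) | ∀ m l, (p.1 m, p.2 l) ∉ F}
        = univ.pi fun _ => {v | ∀ m, (u m, v) ∉ F} by ext; simp [forall_comm (α := Fin M)],
      Measure.pi_pi, Finset.prod_const, Finset.card_univ, Fintype.card_fin]
  have hgood : ∀ᵐ u ∂Measure.pi (fun _ => μU), ∀ m : Fin M, ∫⁻ v, e (u m, v) ∂μV = 1 :=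
    ae_all_iff.2 fun m => (measurePreserving_eval (fun _ => μU) m).quasiMeasurePreserving.ae hU
  have hMinv : (M : ℝ≥0∞)⁻¹ * M = 1 := ENNReal.inv_mul_cancel (by exact_mod_cast hM) (by simp)
  rw [Measure.prod_apply (measurableSet_forall_forall_notMem hF)]
  calc _ ≤ ∫⁻ u, ((M : ℝ≥0∞)⁻¹ * ∑ m, ∫⁻ v, coveringErrorDensity e F θ δ u m v ∂μV
          + ENNReal.ofReal (Real.exp (-b))) ∂Measure.pi (fun _ => μU) := by
        refine lintegral_mono_ae (hgood.mono fun u hu => ?_)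
        rw [hsection]
        exact measure_forall_notMem_pow_le he hF hM hb hθδ hδ₀ hδ hu
    _ = _ := by
        have := measurable_coveringErrorDensity (M := M) (θ := θ) (δ := δ) he hF
        rw [lintegral_add_right _ measurable_const, lintegral_const_mul _ (by fun_prop),
          lintegral_finsetSum _ fun _ _ => by fun_prop]
        simp_rw [lintegral_lintegral_coveringErrorDensity he hF hV]
        rw [Finset.sum_const, Finset.card_univ, Fintype.card_fin, nsmul_eq_mul, ← mul_assoc, hMinv,
          one_mul, lintegral_const, measure_univ, mul_one]

theorem measure_forall_forall_notMem_le_min (he : Measurable e) (hF : MeasurableSet F)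
    (hU : ∀ᵐ u ∂μU, ∫⁻ v, e (u, v) ∂μV = 1) (hV : ∀ᵐ v ∂μV, ∫⁻ u, e (u, v) ∂μU = 1)
    (hM : M ≠ 0) (hL : L ≠ 0) {b : ℝ} (hb : 0 ≤ b) (hθδ : ENNReal.ofReal b * (θ + δ) ≤ M * L)
    (hδ₀ : δ ≠ 0) (hδ : δ ≠ ∞) :
    (Measure.pi fun _ : Fin M => μU).prod (Measure.pi fun _ : Fin L => μV)
        {p | ∀ m l, (p.1 m, p.2 l) ∉ F}
      ≤ (μU.prod μV).withDensity e Fᶜ + (μU.prod μV).withDensity e {p | θ < e p}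
        + δ⁻¹ * (min M L - 1 : ℕ) + ENNReal.ofReal (Real.exp (-b)) := by
  rcases le_total M L with hML | hLM
  · rw [min_eq_left hML]
    exact measure_forall_forall_notMem_le he hF hU hV hM hb hθδ hδ₀ hδ
  · rw [min_eq_right hLM]
    have hswap := measure_forall_forall_notMem_le (θ := θ) (δ := δ) (he.comp measurable_swap)
      (hF.preimage measurable_swap) hV hU hL hb (by rwa [mul_comm (L : ℝ≥0∞)]) hδ₀ hδ
    have hS : Prod.swap ⁻¹'
          {q : (Fin L → 𝓥) × (Fin M → 𝓤) | ∀ l m, (q.1 l, q.2 m) ∉ Prod.swap ⁻¹' F}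
        = {p | ∀ m l, (p.1 m, p.2 l) ∉ F} := by
      ext p
      simp [forall_comm (α := Fin L)]
    rw [← Measure.measurePreserving_swap.measure_preimage_emb
      MeasurableEquiv.prodComm.measurableEmbedding, hS, ← preimage_compl,
      Measure.prod_withDensity_comp_swap_apply] at hswap
    exact hswap.trans_eq (by rw [← Measure.prod_withDensity_comp_swap_apply e {p | θ < e p}]; rfl)

end Covering

section ExpDensity

variable {𝓤 𝓥 : Type*} [MeasurableSpace 𝓤] [MeasurableSpace 𝓥] {μU : Measure 𝓤} {μV : Measure 𝓥}
  [IsProbabilityMeasure μU] [IsProbabilityMeasure μV] {i : 𝓤 × 𝓥 → ℝ} {F : Set (𝓤 × 𝓥)} {M L : ℕ}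
  {δ : ℝ}

theorem toReal_measure_forall_forall_notMem_le_of_nonneg (hi : Measurable i)
    (hF : MeasurableSet F)
    (hU : ∀ᵐ u ∂μU, ∫⁻ v, ENNReal.ofReal (Real.exp (i (u, v))) ∂μV = 1)
    (hV : ∀ᵐ v ∂μV, ∫⁻ u, ENNReal.ofReal (Real.exp (i (u, v))) ∂μU = 1)
    (hM : 0 < M) (hL : 0 < L) (hδ : 0 < δ) {γ : ℝ} (hθ : 0 ≤ (M : ℝ) * L * Real.exp (-γ) - δ) :
    ((Measure.pi fun _ : Fin M => μU).prod (Measure.pi fun _ : Fin L => μV)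
        {p | ∀ m l, (p.1 m, p.2 l) ∉ F}).toReal
      ≤ ((μU.prod μV).withDensity (fun p => ENNReal.ofReal (Real.exp (i p))) Fᶜ).toReal
        + ((μU.prod μV).withDensity (fun p => ENNReal.ofReal (Real.exp (i p)))
            {p | Real.exp (i p) > (M : ℝ) * L * Real.exp (-γ) - δ}).toReal
        + (min (M : ℝ) L - 1) / δ + Real.exp (-Real.exp γ) := by
  have hθδ : ENNReal.ofReal (Real.exp γ)
      * (ENNReal.ofReal ((M : ℝ) * L * Real.exp (-γ) - δ) + ENNReal.ofReal δ) ≤ M * L := by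
    rw [← ENNReal.ofReal_add hθ hδ.le, ← ENNReal.ofReal_mul (Real.exp_pos γ).le, sub_add_cancel,
      show Real.exp γ * (M * L * Real.exp (-γ)) = ((M * L : ℕ) : ℝ) by
        rw [Real.exp_neg]; push_cast; field_simp,
      ENNReal.ofReal_natCast, Nat.cast_mul]
  have hthreshold : {p | ENNReal.ofReal ((M : ℝ) * L * Real.exp (-γ) - δ)
        < ENNReal.ofReal (Real.exp (i p))}
      = {p | Real.exp (i p) > (M : ℝ) * L * Real.exp (-γ) - δ} := by
    ext p
    exact ENNReal.ofReal_lt_ofReal_iff (Real.exp_pos _)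
  have hcount : (ENNReal.ofReal δ)⁻¹ * ((min M L - 1 : ℕ) : ℝ≥0∞)
      = ENNReal.ofReal ((min (M : ℝ) L - 1) / δ) := by
    rw [ENNReal.ofReal_div_of_pos hδ, div_eq_mul_inv, mul_comm, ← ENNReal.ofReal_natCast,
      Nat.cast_sub (le_min hM hL : 1 ≤ min M L), Nat.cast_min, Nat.cast_one]
  have herr : 0 ≤ (min (M : ℝ) L - 1) / δ :=
    div_nonneg (sub_nonneg.2 (le_min (by exact_mod_cast hM) (by exact_mod_cast hL))) hδ.le
  have := isProbabilityMeasure_prod_withDensity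
    (e := fun p => ENNReal.ofReal (Real.exp (i p))) (by fun_prop) hU
  have key := measure_forall_forall_notMem_le_min (e := fun p => ENNReal.ofReal (Real.exp (i p)))
    (by fun_prop) hF hU hV hM.ne' hL.ne'
    (Real.exp_pos γ).le hθδ (ENNReal.ofReal_pos.2 hδ).ne' ENNReal.ofReal_ne_top
  rw [hthreshold, hcount] at key
  refine ENNReal.toReal_le_of_le_ofReal (by positivity) (key.trans_eq ?_)
  rw [ENNReal.ofReal_add (by positivity) (by positivity), ENNReal.ofReal_add (by positivity) herr,
    ENNReal.ofReal_add (by positivity) (by positivity), ENNReal.ofReal_toReal (measure_ne_top _ _),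
    ENNReal.ofReal_toReal (measure_ne_top _ _)]

theorem toReal_measure_forall_forall_notMem_le (hi : Measurable i) (hF : MeasurableSet F)
    (hU : ∀ᵐ u ∂μU, ∫⁻ v, ENNReal.ofReal (Real.exp (i (u, v))) ∂μV = 1)
    (hV : ∀ᵐ v ∂μV, ∫⁻ u, ENNReal.ofReal (Real.exp (i (u, v))) ∂μU = 1)
    (hM : 0 < M) (hL : 0 < L) (hδ : 0 < δ) (γ : ℝ) :
    ((Measure.pi fun _ : Fin M => μU).prod (Measure.pi fun _ : Fin L => μV)
        {p | ∀ m l, (p.1 m, p.2 l) ∉ F}).toReal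
      ≤ ((μU.prod μV).withDensity (fun p => ENNReal.ofReal (Real.exp (i p))) Fᶜ).toReal
        + ((μU.prod μV).withDensity (fun p => ENNReal.ofReal (Real.exp (i p)))
            {p | Real.exp (i p) > (M : ℝ) * L * Real.exp (-γ) - δ}).toReal
        + (min (M : ℝ) L - 1) / δ + Real.exp (-Real.exp γ) := by
  rcases le_or_gt 0 ((M : ℝ) * L * Real.exp (-γ) - δ) with hθ | hθ
  · exact toReal_measure_forall_forall_notMem_le_of_nonneg hi hF hU hV hM hL hδ hθ
  have := isProbabilityMeasure_prod_withDensity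
    (e := fun p => ENNReal.ofReal (Real.exp (i p))) (by fun_prop) hU
  have huniv : {p | Real.exp (i p) > (M : ℝ) * L * Real.exp (-γ) - δ} = univ :=
    eq_univ_of_forall fun p => hθ.trans (Real.exp_pos _)
  have hle : ((Measure.pi fun _ : Fin M => μU).prod (Measure.pi fun _ : Fin L => μV)
      {p | ∀ m l, (p.1 m, p.2 l) ∉ F}).toReal ≤ 1 :=
    ENNReal.toReal_le_of_le_ofReal zero_le_one (by rw [ENNReal.ofReal_one]; exact prob_le_one)
  have herr : 0 ≤ (min (M : ℝ) L - 1) / δ :=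
    div_nonneg (sub_nonneg.2 (le_min (by exact_mod_cast hM) (by exact_mod_cast hL))) hδ.le
  rw [huniv, measure_univ, ENNReal.toReal_one]
  have := Real.exp_nonneg (-Real.exp γ)
  linarith [ENNReal.toReal_nonneg
    (a := (μU.prod μV).withDensity (fun p => ENNReal.ofReal (Real.exp (i p))) Fᶜ)]

end ExpDensity

theorem one_shot_mutual_covering_general
    {Ω 𝓤 𝓥 : Type*} [MeasurableSpace Ω] [MeasurableSpace 𝓤] [MeasurableSpace 𝓥]
    (P : Measure Ω)
    (μUV : Measure (𝓤 × 𝓥))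
    (μU : Measure 𝓤) (μV : Measure 𝓥)
    [IsProbabilityMeasure μU] [IsProbabilityMeasure μV]
    (hμV : μUV.map Prod.snd = μV)
    (κ : Kernel 𝓤 𝓥) [IsMarkovKernel κ]
    (hjoint : μUV = μU ⊗ₘ κ)
    (i : 𝓤 × 𝓥 → ℝ) (hi : Measurable i)
    (hdens : ∀ᵐ u ∂μU, κ u = μV.withDensity (fun v => ENNReal.ofReal (Real.exp (i (u, v)))))
    (M L : ℕ) (hM : 0 < M) (hL : 0 < L)
    (Um : Fin M → Ω → 𝓤) (Vl : Fin L → Ω → 𝓥)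
    (hUm : ∀ m, Measurable (Um m)) (hVl : ∀ l, Measurable (Vl l))
    (hlaw : P.map (fun ω => ((fun m => Um m ω), (fun l => Vl l ω)))
      = (Measure.pi fun _ : Fin M => μU).prod (Measure.pi fun _ : Fin L => μV))
    (F : Set (𝓤 × 𝓥)) (hF : MeasurableSet F)
    (δ γ : ℝ) (hδ : 0 < δ) :
    (P {ω | ∀ m l, (Um m ω, Vl l ω) ∉ F}).toReal
      ≤ (μUV Fᶜ).toReal
        + (μUV {p | Real.exp (i p) > (M : ℝ) * (L : ℝ) * Real.exp (-γ) - δ}).toReal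
        + (min (M : ℝ) (L : ℝ) - 1) / δ
        + Real.exp (-Real.exp γ) := by
  set e : 𝓤 × 𝓥 → ℝ≥0∞ := fun p => ENNReal.ofReal (Real.exp (i p))
  have he : Measurable e := by fun_prop
  have hν : μUV = (μU.prod μV).withDensity e :=
    hjoint.trans (Measure.compProd_eq_prod_withDensity he hdens)
  have hU : ∀ᵐ u ∂μU, ∫⁻ v, e (u, v) ∂μV = 1 := by
    filter_upwards [hdens] with u hu
    rw [← setLIntegral_univ, ← withDensity_apply _ .univ, ← hu, measure_univ]
  have hV : ∀ᵐ v ∂μV, ∫⁻ u, e (u, v) ∂μU = 1 := by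
    rw [hν, Measure.map_snd_prod_withDensity he] at hμV
    exact (withDensity_eq_iff_of_sigmaFinite (by fun_prop) aemeasurable_const).1
      (hμV.trans withDensity_one.symm)
  have hmiss : P {ω | ∀ m l, (Um m ω, Vl l ω) ∉ F}
      = (Measure.pi fun _ : Fin M => μU).prod (Measure.pi fun _ : Fin L => μV)
          {p | ∀ m l, (p.1 m, p.2 l) ∉ F} := by
    rw [← hlaw, Measure.map_apply (by fun_prop) (measurableSet_forall_forall_notMem hF)]
    rfl
  rw [hmiss, hν]
  exact toReal_measure_forall_forall_notMem_le hi hF hU hV hM hL hδ γ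

/-- One-shot mutual covering lemma (Lemma 1). `U₁,…,U_M` i.i.d. `P_U`, `V₁,…,V_L`
i.i.d. `P_V`, all independent; `ı_{U;V}` is the information density, i.e.
`exp ∘ i (u, ·)` is the density of `P_{V|U=u}` w.r.t. `P_V`. Then for every
measurable `F` and `δ, γ > 0`:
`P[∩ₘ∩ₗ {(Uₘ,Vₗ) ∉ F}] ≤ P[(U,V) ∉ F] + P[exp ı > ML e^{-γ} - δ] + (min{M,L}-1)/δ + e^{-e^γ}`. -/
theorem one_shot_mutual_covering
    {Ω 𝓤 𝓥 : Type*} [MeasurableSpace Ω] [MeasurableSpace 𝓤] [MeasurableSpace 𝓥]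
    (P : Measure Ω) [IsProbabilityMeasure P]
    (μUV : Measure (𝓤 × 𝓥)) [IsProbabilityMeasure μUV]
    (μU : Measure 𝓤) (μV : Measure 𝓥)
    [IsProbabilityMeasure μU] [IsProbabilityMeasure μV]
    (hμU : μUV.map Prod.fst = μU) (hμV : μUV.map Prod.snd = μV)
    (κ : Kernel 𝓤 𝓥) [IsMarkovKernel κ]
    (hjoint : μUV = μU ⊗ₘ κ)
    (i : 𝓤 × 𝓥 → ℝ) (hi : Measurable i)
    (hdens : ∀ᵐ u ∂μU, κ u = μV.withDensity (fun v => ENNReal.ofReal (Real.exp (i (u, v)))))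
    (M L : ℕ) (hM : 0 < M) (hL : 0 < L)
    (Um : Fin M → Ω → 𝓤) (Vl : Fin L → Ω → 𝓥)
    (hUm : ∀ m, Measurable (Um m)) (hVl : ∀ l, Measurable (Vl l))
    (hlaw : P.map (fun ω => ((fun m => Um m ω), (fun l => Vl l ω)))
      = (Measure.pi fun _ : Fin M => μU).prod (Measure.pi fun _ : Fin L => μV))
    (F : Set (𝓤 × 𝓥)) (hF : MeasurableSet F)
    (δ γ : ℝ) (hδ : 0 < δ) (hγ : 0 < γ) :
    (P {ω | ∀ m l, (Um m ω, Vl l ω) ∉ F}).toReal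
      ≤ (μUV Fᶜ).toReal
        + (μUV {p | Real.exp (i p) > (M : ℝ) * (L : ℝ) * Real.exp (-γ) - δ}).toReal
        + (min (M : ℝ) (L : ℝ) - 1) / δ
        + Real.exp (-Real.exp γ) :=
  one_shot_mutual_covering_general P μUV μU μV hμV κ hjoint i hi hdens M L hM hL Um Vl hUm hVl hlaw
    F hF δ γ hδ
end

section
/- (Conditional one-shot mutual covering lemma.) Fix a joint distribution P_{UST} and let (U, S₁,…,S_M, T₁,…,T_L) be distributed as P_U ⊗ (P_{S|U})^{⊗M} ⊗ (P_{T|U})^{⊗L}, i.e., given U the S_m are i.i.d. P_{S|U} and the T_l are i.i.d. P_{T|U}, with the two families conditionally independent given U. Then for all γ > 0 and measurable F: P[∩_{m=1}^{M} ∩_{l=1}^{L} {(U, S_m, T_l) ∉ F}] ≤ P[{(U,S,T) ∉ F} ∪ {ı_{S;T|U}(S;T|U) > log(ML) − 2γ}] + (min{M,L} − 1)/(ML(exp(−γ) − exp(−2γ))) + exp(−exp(γ)), where (U,S,T) ∼ P_{UST} and ı_{S;T|U}(s;t|u) = log(dP_{T|U=u,S=s}/dP_{T|U=u})(t). -/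
/-!
Conditionally on `U = u` the claim is the unconditional one-shot mutual covering lemma for
`P_{S|U=u}`, `P_{T|U=u}` and the density `exp ı(·;·|u)`; averaging over `u` gives the theorem.

For the unconditional lemma let `g` be the density restricted to `G = F ∩ {ı ≤ log (ML) - 2γ}`,
so that `g ≤ ML e^{-2γ}`. Given `T^L = t`, all pairs `(Sₘ, tₗ)` miss `G` with probability at
most `(1 - P_S(H_t))^M`, where `H_t` is the support of the load `λ(s) = ∑ₗ g(s, tₗ)`. Let `x(t)`
be the mean of `min(λ, ML e^{-γ})` divided by `L`. Then `x(t) ≤ 1` and `e^γ x(t) ≤ M P_S(H_t)`,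
so `(1 - P_S(H_t))^M ≤ 1 - x(t) + exp(-e^γ)`. Where `λ` exceeds `ML e^{-γ}`, the terms other
than any given one sum to at least `ML (e^{-γ} - e^{-2γ})`, so a pairwise second-moment bound
gives `P[G] ≤ E x(T^L) + (L - 1) / (ML (e^{-γ} - e^{-2γ}))`. Exchanging the roles of `S` and `T`
gives `min {M, L}`.
-/

open MeasureTheory ProbabilityTheory Set
open scoped ENNReal

namespace MutualCovering

lemma real_one_sub_pow_le_one_sub_add_exp_neg {a b k : ℝ} (ha : a ≤ 1) (hb₀ : 0 ≤ b)
    (hb₁ : b ≤ 1) (M : ℕ) (hk : k * b ≤ M * a) :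
    (1 - a) ^ M ≤ 1 - b + Real.exp (-k) := by
  have hpow : (1 - a) ^ M ≤ Real.exp (-(M * a)) := by
    calc (1 - a) ^ M ≤ Real.exp (-a) ^ M := by
          gcongr
          linarith [Real.add_one_le_exp (-a)]
      _ = Real.exp (-(M * a)) := by rw [← Real.exp_nat_mul]; ring_nf
  -- `exp` lies below its chord on `[-k, 0]`
  have hchord : Real.exp (b * -k) ≤ b * Real.exp (-k) + (1 - b) := by
    simpa using convexOn_exp.2 (mem_univ (-k)) (mem_univ 0) hb₀ (by linarith) (by ring)
  calc (1 - a) ^ M ≤ Real.exp (-(M * a)) := hpow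
    _ ≤ Real.exp (b * -k) := Real.exp_le_exp.mpr (by linarith)
    _ ≤ 1 - b + Real.exp (-k) := by nlinarith [Real.exp_pos (-k)]

lemma one_sub_pow_le_one_sub_add_exp_neg {h x : ℝ≥0∞} (hh : h ≤ 1) (hx : x ≤ 1)
    {k : ℝ} (hk₀ : 0 ≤ k) (M : ℕ) (hk : ENNReal.ofReal k * x ≤ M * h) :
    (1 - h) ^ M ≤ 1 - x + ENNReal.ofReal (Real.exp (-k)) := by
  lift h to NNReal using ne_top_of_le_ne_top ENNReal.one_ne_top hh
  lift x to NNReal using ne_top_of_le_ne_top ENNReal.one_ne_top hx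
  have hh' : (h : ℝ) ≤ 1 := by exact_mod_cast hh
  have hx' : (x : ℝ) ≤ 1 := by exact_mod_cast hx
  have hk' : k * x ≤ M * h := by
    simpa [ENNReal.toReal_mul, hk₀] using
      ENNReal.toReal_mono (by simp [ENNReal.mul_eq_top]) hk
  rw [← ENNReal.ofReal_one, ← ENNReal.ofReal_coe_nnreal, ← ENNReal.ofReal_coe_nnreal (p := x),
    ← ENNReal.ofReal_sub _ h.coe_nonneg, ← ENNReal.ofReal_sub _ x.coe_nonneg,
    ← ENNReal.ofReal_pow (by linarith), ← ENNReal.ofReal_add (by linarith) (Real.exp_nonneg _)]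
  exact ENNReal.ofReal_le_ofReal (real_one_sub_pow_le_one_sub_add_exp_neg hh' x.2 hx' M hk')

lemma sum_le_min_add_sum_mul_sum_erase_div {ι : Type*} [Fintype ι] [DecidableEq ι]
    (a : ι → ℝ≥0∞) {c d : ℝ≥0∞} (ha : ∀ i, a i ≤ c) (hc : c ≠ ∞) (hd : d ≠ 0) :
    ∑ i, a i ≤ min (∑ i, a i) (c + d) + (∑ i, a i * ∑ j ∈ Finset.univ.erase i, a j) / d := by
  by_cases hsum : ∑ i, a i ≤ c + d
  · rw [min_eq_left hsum]
    exact le_self_add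
  push Not at hsum
  have hd_top : d ≠ ∞ := fun h => by simp [h] at hsum
  -- every summand is at most `c`, so the others sum to more than `d`
  have hrest : ∀ i, d ≤ ∑ j ∈ Finset.univ.erase i, a j := fun i => by
    rw [← Finset.add_sum_erase _ _ (Finset.mem_univ i)] at hsum
    exact ((ENNReal.add_lt_add_iff_left hc).mp (hsum.trans_le (by gcongr; exact ha i))).le
  calc ∑ i, a i ≤ ∑ i, a i * (∑ j ∈ Finset.univ.erase i, a j) / d := by
        gcongr with i
        rw [ENNReal.le_div_iff_mul_le (Or.inl hd) (Or.inl hd_top)]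
        gcongr
        exact hrest i
    _ = (∑ i, a i * ∑ j ∈ Finset.univ.erase i, a j) / d := by
        simp only [div_eq_mul_inv, Finset.sum_mul]
    _ ≤ _ := le_add_self

lemma lintegral_min_le_mul_measure_support {α : Type*} [MeasurableSpace α] (ν : Measure α)
    {φ : α → ℝ≥0∞} (hφ : Measurable φ) (c : ℝ≥0∞) :
    ∫⁻ a, min (φ a) c ∂ν ≤ c * ν (Function.support φ) := by
  rw [← lintegral_indicator_const (measurableSet_support hφ)]
  refine lintegral_mono fun a => ?_
  by_cases ha : φ a = 0
  · simp [ha]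
  · simp [indicator_of_mem (Function.mem_support.mpr ha)]

variable {𝓢 𝓣 : Type*} [MeasurableSpace 𝓢] [MeasurableSpace 𝓣]

lemma measure_pi_prod_setOf_forall_notMem {ι β : Type*} [Fintype ι] [MeasurableSpace β]
    (ν₁ : Measure 𝓢) [IsProbabilityMeasure ν₁] (ν : Measure β) [SFinite ν]
    {A : Set (𝓢 × β)} (hA : MeasurableSet A) :
    ((Measure.pi fun _ : ι => ν₁).prod ν) {p | ∀ i, (p.1 i, p.2) ∉ A}
      = ∫⁻ b, (1 - ν₁ {s | (s, b) ∈ A}) ^ Fintype.card ι ∂ν := by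
  have hmeas : MeasurableSet {p : (ι → 𝓢) × β | ∀ i, (p.1 i, p.2) ∉ A} := by
    rw [ofPred_forall]
    exact .iInter fun i => hA.compl.preimage (by fun_prop)
  rw [Measure.prod_apply_symm hmeas]
  refine lintegral_congr fun b => ?_
  have hsection : (fun x => (x, b)) ⁻¹' {p : (ι → 𝓢) × β | ∀ i, (p.1 i, p.2) ∉ A}
      = univ.pi fun _ => {s | (s, b) ∈ A}ᶜ := by
    ext x; simp
  rw [hsection, Measure.pi_pi,
    prob_compl_eq_one_sub (s := {s | (s, b) ∈ A}) (hA.preimage (by fun_prop)),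
    Finset.prod_const, Finset.card_univ]

lemma lintegral_pi_mul_eval_eval {ι : Type*} [Fintype ι] (ν : Measure 𝓣) [IsProbabilityMeasure ν]
    {i j : ι} (hij : i ≠ j) {φ : 𝓣 → ℝ≥0∞} (hφ : Measurable φ) :
    ∫⁻ x, φ (x i) * φ (x j) ∂(Measure.pi fun _ : ι => ν) = (∫⁻ t, φ t ∂ν) ^ 2 := by
  have hindep := (iIndepFun_pi (μ := fun _ : ι => ν) (fun _ => hφ.aemeasurable)).indepFun hij
  have hmeas (k : ι) : Measurable fun x : ι → 𝓣 => φ (x k) := hφ.comp (measurable_pi_apply k)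
  rw [lintegral_mul_eq_lintegral_mul_lintegral_of_indepFun'' (hmeas i).aemeasurable
    (hmeas j).aemeasurable hindep, (measurePreserving_eval _ i).lintegral_comp hφ,
    (measurePreserving_eval _ j).lintegral_comp hφ, sq]

noncomputable def truncatedLoad (ν₁ : Measure 𝓢) (g : 𝓢 × 𝓣 → ℝ≥0∞) (c : ℝ≥0∞) {ι : Type*}
    [Fintype ι] (t : ι → 𝓣) : ℝ≥0∞ :=
  (∫⁻ s, min (∑ l, g (s, t l)) c ∂ν₁) / Fintype.card ι

@[fun_prop]
lemma measurable_truncatedLoad {ν₁ : Measure 𝓢} [SFinite ν₁] {g : 𝓢 × 𝓣 → ℝ≥0∞}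
    (hg : Measurable g) (c : ℝ≥0∞) {ι : Type*} [Fintype ι] :
    Measurable (truncatedLoad ν₁ g c (ι := ι)) :=
  (Measurable.lintegral_prod_left'
    (f := fun q : 𝓢 × (ι → 𝓣) => min (∑ l, g (q.1, q.2 l)) c) (by fun_prop)).div_const _

variable {ν₁ : Measure 𝓢} {ν₂ : Measure 𝓣} {g : 𝓢 × 𝓣 → ℝ≥0∞} {ιT : Type*} [Fintype ιT]

lemma ofReal_mul_truncatedLoad_le [Nonempty ιT] (hg : Measurable g) {k : ℝ} {c : ℝ≥0∞} (M : ℕ)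
    (hkc : ENNReal.ofReal k * c = M * Fintype.card ιT) (t : ιT → 𝓣) :
    ENNReal.ofReal k * truncatedLoad ν₁ g c t
      ≤ M * ν₁ (Function.support fun s => ∑ l, g (s, t l)) := by
  have hn₀ : (Fintype.card ιT : ℝ≥0∞) ≠ 0 := by simp
  calc ENNReal.ofReal k * truncatedLoad ν₁ g c t
      = ENNReal.ofReal k * (∫⁻ s, min (∑ l, g (s, t l)) c ∂ν₁) / Fintype.card ιT :=
        (mul_div_assoc ..).symm
    _ ≤ ENNReal.ofReal k * (c * ν₁ (Function.support fun s => ∑ l, g (s, t l)))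
          / Fintype.card ιT := by
        gcongr
        exact lintegral_min_le_mul_measure_support ν₁ (by fun_prop) c
    _ = M * ν₁ (Function.support fun s => ∑ l, g (s, t l)) := by
        rw [← mul_assoc, hkc, mul_right_comm, ENNReal.mul_div_cancel_right hn₀ (by simp)]

variable [IsProbabilityMeasure ν₂]

lemma ae_truncatedLoad_le_one [Nonempty ιT] (hg : Measurable g)
    (h₂ : ∀ᵐ t ∂ν₂, ∫⁻ s, g (s, t) ∂ν₁ ≤ 1) (c : ℝ≥0∞) :
    ∀ᵐ t ∂(Measure.pi fun _ : ιT => ν₂), truncatedLoad ν₁ g c t ≤ 1 := by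
  have h₂' : ∀ᵐ t ∂(Measure.pi fun _ : ιT => ν₂), ∀ l, ∫⁻ s, g (s, t l) ∂ν₁ ≤ 1 :=
    ae_all_iff.mpr fun l =>
      (measurePreserving_eval (fun _ => ν₂) l).quasiMeasurePreserving.ae
        (p := fun t => ∫⁻ s, g (s, t) ∂ν₁ ≤ 1) h₂
  filter_upwards [h₂'] with t ht
  refine ENNReal.div_le_of_le_mul ?_
  calc ∫⁻ s, min (∑ l, g (s, t l)) c ∂ν₁ ≤ ∫⁻ s, ∑ l, g (s, t l) ∂ν₁ :=
        lintegral_mono fun s => min_le_left _ _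
    _ = ∑ l, ∫⁻ s, g (s, t l) ∂ν₁ := lintegral_finsetSum _ fun l _ => by fun_prop
    _ ≤ ∑ _l : ιT, 1 := Finset.sum_le_sum fun l _ => ht l
    _ = 1 * Fintype.card ιT := by simp

variable [IsProbabilityMeasure ν₁]

lemma measure_pi_prod_forall_eq_zero_add_lintegral_truncatedLoad_le {ιS : Type*} [Fintype ιS]
    [Nonempty ιT] (hg : Measurable g) (h₂ : ∀ᵐ t ∂ν₂, ∫⁻ s, g (s, t) ∂ν₁ ≤ 1) {k : ℝ}
    (hk : 0 ≤ k) {c : ℝ≥0∞} (hkc : ENNReal.ofReal k * c = Fintype.card ιS * Fintype.card ιT) :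
    ((Measure.pi fun _ : ιS => ν₁).prod (Measure.pi fun _ : ιT => ν₂))
        {p | ∀ m l, g (p.1 m, p.2 l) = 0}
      + ∫⁻ t, truncatedLoad ν₁ g c t ∂(Measure.pi fun _ : ιT => ν₂)
      ≤ 1 + ENNReal.ofReal (Real.exp (-k)) := by
  set A := Function.support fun q : 𝓢 × (ιT → 𝓣) => ∑ l, g (q.1, q.2 l)
  have hevent : {p : (ιS → 𝓢) × (ιT → 𝓣) | ∀ m l, g (p.1 m, p.2 l) = 0}
      = {p | ∀ m, (p.1 m, p.2) ∉ A} := by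
    ext p; simp [A]
  rw [hevent, measure_pi_prod_setOf_forall_notMem ν₁ _ (measurableSet_support (by fun_prop)),
    ← lintegral_add_right' _ (by fun_prop)]
  calc ∫⁻ t, ((1 - ν₁ {s | (s, t) ∈ A}) ^ Fintype.card ιS + truncatedLoad ν₁ g c t)
        ∂(Measure.pi fun _ : ιT => ν₂)
      ≤ ∫⁻ _, (1 + ENNReal.ofReal (Real.exp (-k))) ∂(Measure.pi fun _ : ιT => ν₂) := by
        refine lintegral_mono_ae ((ae_truncatedLoad_le_one hg h₂ c).mono fun t ht => ?_)
        calc (1 - ν₁ {s | (s, t) ∈ A}) ^ Fintype.card ιS + truncatedLoad ν₁ g c t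
            ≤ 1 - truncatedLoad ν₁ g c t + ENNReal.ofReal (Real.exp (-k))
              + truncatedLoad ν₁ g c t := by
              gcongr
              exact one_sub_pow_le_one_sub_add_exp_neg prob_le_one ht hk _
                (ofReal_mul_truncatedLoad_le hg _ hkc t)
          _ = 1 + ENNReal.ofReal (Real.exp (-k)) := by
              rw [add_right_comm, tsub_add_cancel_of_le ht]
    _ = 1 + ENNReal.ofReal (Real.exp (-k)) := by simp

lemma lintegral_prod_pi_sum (hg : Measurable g) :
    ∫⁻ q, ∑ l, g (q.1, q.2 l) ∂(ν₁.prod (Measure.pi fun _ : ιT => ν₂))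
      = Fintype.card ιT * ∫⁻ q, g q ∂(ν₁.prod ν₂) := by
  have heval (l : ιT) : ∫⁻ q, g (q.1, q.2 l) ∂(ν₁.prod (Measure.pi fun _ : ιT => ν₂))
      = ∫⁻ q, g q ∂(ν₁.prod ν₂) :=
    ((MeasurePreserving.id ν₁).prod (measurePreserving_eval _ l)).lintegral_comp hg
  rw [lintegral_finsetSum _ fun l _ => by fun_prop, Finset.sum_congr rfl fun l _ => heval l]
  simp

lemma lintegral_prod_pi_mul_le_one (hg : Measurable g) (h₁ : ∀ᵐ s ∂ν₁, ∫⁻ t, g (s, t) ∂ν₂ ≤ 1)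
    {l l' : ιT} (hll' : l ≠ l') :
    ∫⁻ q, g (q.1, q.2 l) * g (q.1, q.2 l') ∂(ν₁.prod (Measure.pi fun _ : ιT => ν₂)) ≤ 1 := by
  rw [lintegral_prod _ (by fun_prop)]
  have hsection (s : 𝓢) :=
    lintegral_pi_mul_eval_eval ν₂ hll' (φ := fun t => g (s, t)) (by fun_prop)
  simp only [hsection]
  calc ∫⁻ s, (∫⁻ t, g (s, t) ∂ν₂) ^ 2 ∂ν₁ ≤ ∫⁻ s, ∫⁻ t, g (s, t) ∂ν₂ ∂ν₁ := by
        refine lintegral_mono_ae (h₁.mono fun s hs => ?_)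
        rw [sq]
        exact mul_le_of_le_one_right' hs
    _ ≤ ∫⁻ _, 1 ∂ν₁ := lintegral_mono_ae h₁
    _ = 1 := by simp

lemma lintegral_prod_pi_sum_mul_sum_erase_le [DecidableEq ιT] (hg : Measurable g)
    (h₁ : ∀ᵐ s ∂ν₁, ∫⁻ t, g (s, t) ∂ν₂ ≤ 1) :
    ∫⁻ q, ∑ l, g (q.1, q.2 l) * ∑ l' ∈ Finset.univ.erase l, g (q.1, q.2 l')
        ∂(ν₁.prod (Measure.pi fun _ : ιT => ν₂))
      ≤ Fintype.card ιT * ((Fintype.card ιT : ℝ≥0∞) - 1) := by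
  simp_rw [Finset.mul_sum]
  rw [lintegral_finsetSum _ fun l _ => by fun_prop]
  calc _ ≤ ∑ l : ιT, ∑ l' ∈ Finset.univ.erase l, (1 : ℝ≥0∞) := by
        gcongr with l
        rw [lintegral_finsetSum _ fun l' _ => by fun_prop]
        gcongr with l' hl'
        exact lintegral_prod_pi_mul_le_one hg h₁ (Finset.ne_of_mem_erase hl').symm
    _ = _ := by simp [Finset.card_erase_of_mem, ENNReal.natCast_sub]

lemma lintegral_le_lintegral_truncatedLoad_add [Nonempty ιT] (hg : Measurable g)
    {c d : ℝ≥0∞} (hgc : ∀ q, g q ≤ c) (hc : c ≠ ∞) (hd : d ≠ 0)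
    (h₁ : ∀ᵐ s ∂ν₁, ∫⁻ t, g (s, t) ∂ν₂ ≤ 1) :
    ∫⁻ q, g q ∂(ν₁.prod ν₂)
      ≤ ∫⁻ t, truncatedLoad ν₁ g (c + d) t ∂(Measure.pi fun _ : ιT => ν₂)
        + ((Fintype.card ιT : ℝ≥0∞) - 1) / d := by
  classical
  set n : ℝ≥0∞ := (Fintype.card ιT : ℝ≥0∞)
  set νL := Measure.pi fun _ : ιT => ν₂
  have hn₀ : n ≠ 0 := by simp [n]
  have hn : n ≠ ∞ := ENNReal.natCast_ne_top _
  have hload : ∫⁻ q, min (∑ l, g (q.1, q.2 l)) (c + d) ∂(ν₁.prod νL)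
      = n * ∫⁻ t, truncatedLoad ν₁ g (c + d) t ∂νL := by
    rw [lintegral_prod_symm _ (by fun_prop)]
    simp only [truncatedLoad, div_eq_mul_inv]
    rw [lintegral_mul_const _ (by fun_prop), ← div_eq_mul_inv, ENNReal.mul_div_cancel hn₀ hn]
  refine (ENNReal.mul_le_mul_iff_right hn₀ hn).mp ?_
  calc n * ∫⁻ q, g q ∂(ν₁.prod ν₂) = ∫⁻ q, ∑ l, g (q.1, q.2 l) ∂(ν₁.prod νL) :=
        (lintegral_prod_pi_sum hg).symm
    _ ≤ ∫⁻ q, (min (∑ l, g (q.1, q.2 l)) (c + d)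
          + (∑ l, g (q.1, q.2 l) * ∑ l' ∈ Finset.univ.erase l, g (q.1, q.2 l')) / d)
          ∂(ν₁.prod νL) :=
        lintegral_mono fun q => sum_le_min_add_sum_mul_sum_erase_div _ (fun l => hgc _) hc hd
    _ = n * ∫⁻ t, truncatedLoad ν₁ g (c + d) t ∂νL
          + (∫⁻ q, ∑ l, g (q.1, q.2 l) * ∑ l' ∈ Finset.univ.erase l, g (q.1, q.2 l')
            ∂(ν₁.prod νL)) / d := by
        rw [lintegral_add_left (by fun_prop), hload]
        simp only [div_eq_mul_inv]
        rw [lintegral_mul_const _ (by fun_prop)]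
    _ ≤ n * ∫⁻ t, truncatedLoad ν₁ g (c + d) t ∂νL + n * (n - 1) / d := by
        gcongr
        exact lintegral_prod_pi_sum_mul_sum_erase_le hg h₁
    _ = n * (∫⁻ t, truncatedLoad ν₁ g (c + d) t ∂νL + (n - 1) / d) := by
        rw [mul_add, mul_div_assoc]

lemma measure_pi_prod_forall_eq_zero_add_lintegral_le {ιS : Type*} [Fintype ιS] [Nonempty ιS]
    [Nonempty ιT] (hg : Measurable g) {γ : ℝ} (hγ : 0 < γ)
    (hgc : ∀ q, g q ≤ ENNReal.ofReal (Fintype.card ιS * Fintype.card ιT * Real.exp (-2 * γ)))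
    (h₁ : ∀ᵐ s ∂ν₁, ∫⁻ t, g (s, t) ∂ν₂ ≤ 1) (h₂ : ∀ᵐ t ∂ν₂, ∫⁻ s, g (s, t) ∂ν₁ ≤ 1) :
    ((Measure.pi fun _ : ιS => ν₁).prod (Measure.pi fun _ : ιT => ν₂))
        {p | ∀ m l, g (p.1 m, p.2 l) = 0} + ∫⁻ q, g q ∂(ν₁.prod ν₂)
      ≤ 1 + ENNReal.ofReal ((Fintype.card ιT - 1)
          / (Fintype.card ιS * Fintype.card ιT * (Real.exp (-γ) - Real.exp (-2 * γ))))
        + ENNReal.ofReal (Real.exp (-Real.exp γ)) := by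
  set nS : ℝ := (Fintype.card ιS : ℝ)
  set nT : ℝ := (Fintype.card ιT : ℝ)
  have hnS : 0 < nS := by simp [nS, Fintype.card_pos]
  have hnT : 1 ≤ nT := by simp [nT, Nat.one_le_iff_ne_zero]
  have hgap : 0 < Real.exp (-γ) - Real.exp (-2 * γ) := by
    linarith [Real.exp_lt_exp.mpr (show -2 * γ < -γ by linarith)]
  set d := ENNReal.ofReal (nS * nT * (Real.exp (-γ) - Real.exp (-2 * γ)))
  have hd : d ≠ 0 := (ENNReal.ofReal_pos.mpr (by positivity)).ne'
  have hkc : ENNReal.ofReal (Real.exp γ) * (ENNReal.ofReal (nS * nT * Real.exp (-2 * γ)) + d)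
      = Fintype.card ιS * Fintype.card ιT := by
    have he : Real.exp γ * Real.exp (-γ) = 1 := by
      rw [← Real.exp_add, add_neg_cancel, Real.exp_zero]
    rw [← ENNReal.ofReal_add (by positivity) (by positivity),
      ← ENNReal.ofReal_mul (Real.exp_nonneg _), show Real.exp γ * (nS * nT * Real.exp (-2 * γ)
        + nS * nT * (Real.exp (-γ) - Real.exp (-2 * γ))) = nS * nT by
          linear_combination (nS * nT) * he,
      ENNReal.ofReal_mul hnS.le]
    simp [nS, nT]
  have hloss : ((Fintype.card ιT : ℝ≥0∞) - 1) / d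
      = ENNReal.ofReal ((nT - 1) / (nS * nT * (Real.exp (-γ) - Real.exp (-2 * γ)))) := by
    rw [ENNReal.ofReal_div_of_pos (by positivity), ENNReal.ofReal_sub _ zero_le_one,
      ENNReal.ofReal_one]
    congr 2
    simp [nT]
  calc _ ≤ ((Measure.pi fun _ : ιS => ν₁).prod (Measure.pi fun _ : ιT => ν₂))
          {p | ∀ m l, g (p.1 m, p.2 l) = 0}
        + (∫⁻ t, truncatedLoad ν₁ g _ t ∂(Measure.pi fun _ : ιT => ν₂)
          + ((Fintype.card ιT : ℝ≥0∞) - 1) / d) := by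
        gcongr
        exact lintegral_le_lintegral_truncatedLoad_add hg hgc ENNReal.ofReal_ne_top hd h₁
    _ ≤ 1 + ENNReal.ofReal (Real.exp (-Real.exp γ)) + ((Fintype.card ιT : ℝ≥0∞) - 1) / d := by
        rw [← add_assoc]
        gcongr ?_ + _
        exact measure_pi_prod_forall_eq_zero_add_lintegral_truncatedLoad_le hg h₂
          (Real.exp_nonneg γ) hkc
    _ = _ := by rw [hloss, add_right_comm]

lemma measure_pi_prod_forall_eq_zero_add_lintegral_le_min {ιS : Type*} [Fintype ιS]
    [Nonempty ιS] [Nonempty ιT] (hg : Measurable g) {γ : ℝ} (hγ : 0 < γ)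
    (hgc : ∀ q, g q ≤ ENNReal.ofReal (Fintype.card ιS * Fintype.card ιT * Real.exp (-2 * γ)))
    (h₁ : ∀ᵐ s ∂ν₁, ∫⁻ t, g (s, t) ∂ν₂ ≤ 1) (h₂ : ∀ᵐ t ∂ν₂, ∫⁻ s, g (s, t) ∂ν₁ ≤ 1) :
    ((Measure.pi fun _ : ιS => ν₁).prod (Measure.pi fun _ : ιT => ν₂))
        {p | ∀ m l, g (p.1 m, p.2 l) = 0} + ∫⁻ q, g q ∂(ν₁.prod ν₂)
      ≤ 1 + ENNReal.ofReal ((min (Fintype.card ιS : ℝ) (Fintype.card ιT) - 1)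
          / (Fintype.card ιS * Fintype.card ιT * (Real.exp (-γ) - Real.exp (-2 * γ))))
        + ENNReal.ofReal (Real.exp (-Real.exp γ)) := by
  rcases le_total (Fintype.card ιT : ℝ) (Fintype.card ιS) with h | h
  · rw [min_eq_right h]
    exact measure_pi_prod_forall_eq_zero_add_lintegral_le hg hγ hgc h₁ h₂
  rw [min_eq_left h]
  have hswap := measure_pi_prod_forall_eq_zero_add_lintegral_le (ν₁ := ν₂) (ν₂ := ν₁) (ιT := ιS)
    (ιS := ιT) (g := g ∘ Prod.swap) (hg.comp measurable_swap) hγ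
    (fun q => (hgc q.swap).trans_eq (by rw [mul_comm (Fintype.card ιT : ℝ)])) h₂ h₁
  have hevent : ((Measure.pi fun _ : ιT => ν₂).prod (Measure.pi fun _ : ιS => ν₁))
        {p | ∀ l m, (g ∘ Prod.swap) (p.1 l, p.2 m) = 0}
      = ((Measure.pi fun _ : ιS => ν₁).prod (Measure.pi fun _ : ιT => ν₂))
        {p | ∀ m l, g (p.1 m, p.2 l) = 0} := by
    rw [← Measure.prod_swap, Measure.map_apply measurable_swap (by measurability)]
    congr 1
    ext p
    simp only [mem_preimage, mem_ofPred_eq, Prod.fst_swap, Prod.snd_swap, Function.comp_apply,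
      Prod.swap_prod_mk]
    exact forall_comm
  rwa [hevent, show ∫⁻ q, (g ∘ Prod.swap) q ∂(ν₂.prod ν₁) = ∫⁻ q, g q ∂(ν₁.prod ν₂) from
    lintegral_prod_swap g, mul_comm (Fintype.card ιT : ℝ)] at hswap

theorem one_shot_mutual_covering {i : 𝓢 → 𝓣 → ℝ} (hi : Measurable fun q : 𝓢 × 𝓣 => i q.1 q.2)
    (h₁ : ∀ᵐ s ∂ν₁, ∫⁻ t, ENNReal.ofReal (Real.exp (i s t)) ∂ν₂ = 1)
    (h₂ : ∀ᵐ t ∂ν₂, ∫⁻ s, ENNReal.ofReal (Real.exp (i s t)) ∂ν₁ = 1)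
    {M L : ℕ} (hM : 0 < M) (hL : 0 < L) {F : Set (𝓢 × 𝓣)} (hF : MeasurableSet F)
    {γ : ℝ} (hγ : 0 < γ) :
    ((Measure.pi fun _ : Fin M => ν₁).prod (Measure.pi fun _ : Fin L => ν₂))
        {p | ∀ m l, (p.1 m, p.2 l) ∉ F}
      ≤ ((ν₁.prod ν₂).withDensity fun q => ENNReal.ofReal (Real.exp (i q.1 q.2)))
          (Fᶜ ∪ {q | i q.1 q.2 > Real.log (M * L) - 2 * γ})
        + ENNReal.ofReal ((min (M : ℝ) L - 1) / (M * L * (Real.exp (-γ) - Real.exp (-2 * γ))))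
        + ENNReal.ofReal (Real.exp (-Real.exp γ)) := by
  have : Nonempty (Fin M) := ⟨⟨0, hM⟩⟩
  have : Nonempty (Fin L) := ⟨⟨0, hL⟩⟩
  set f : 𝓢 × 𝓣 → ℝ≥0∞ := fun q => ENNReal.ofReal (Real.exp (i q.1 q.2))
  set ρ := (ν₁.prod ν₂).withDensity f
  set G := F ∩ {q | i q.1 q.2 ≤ Real.log (M * L) - 2 * γ}
  have hf : Measurable f := by fun_prop
  have hG : MeasurableSet G := hF.inter (measurableSet_le hi measurable_const)
  have hgc : ∀ q, G.indicator f q ≤ ENNReal.ofReal (M * L * Real.exp (-2 * γ)) := by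
    intro q
    by_cases hq : q ∈ G
    · rw [indicator_of_mem hq]
      refine ENNReal.ofReal_le_ofReal ((Real.exp_le_exp.mpr hq.2).trans_eq ?_)
      rw [Real.exp_sub, Real.exp_log (by positivity), neg_mul, Real.exp_neg, div_eq_mul_inv]
    · simp [indicator_of_notMem hq]
  have hcore := measure_pi_prod_forall_eq_zero_add_lintegral_le_min (ιS := Fin M) (ιT := Fin L)
    (hf.indicator hG) hγ (by simpa using hgc)
    (h₁.mono fun s hs => (lintegral_mono fun t => indicator_le_self G f _).trans hs.le)
    (h₂.mono fun t ht => (lintegral_mono fun s => indicator_le_self G f _).trans ht.le)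
  rw [Fintype.card_fin, Fintype.card_fin, lintegral_indicator hG, ← withDensity_apply _ hG]
    at hcore
  have hρ : ρ G + ρ Gᶜ = 1 := by
    rw [measure_add_measure_compl hG, withDensity_apply _ MeasurableSet.univ, setLIntegral_univ,
      lintegral_prod _ hf.aemeasurable, lintegral_congr_ae h₁, lintegral_one, measure_univ]
  have hevent : {p : (Fin M → 𝓢) × (Fin L → 𝓣) | ∀ m l, (p.1 m, p.2 l) ∉ F}
      ⊆ {p | ∀ m l, G.indicator f (p.1 m, p.2 l) = 0} :=
    fun p hp m l => indicator_of_notMem (fun hG => hp m l hG.1) f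
  have hGc : Fᶜ ∪ {q | i q.1 q.2 > Real.log (M * L) - 2 * γ} = Gᶜ := by
    ext q
    simp [G, imp_iff_not_or]
  rw [hGc]
  refine (measure_mono hevent).trans (ENNReal.le_of_add_le_add_right
    (ne_top_of_le_ne_top ENNReal.one_ne_top (hρ ▸ le_self_add)) (hcore.trans_eq ?_))
  rw [← hρ]
  ring

lemma map_swap_withDensity_prod {μ : Measure 𝓢} {ν : Measure 𝓣} [SFinite μ] [SFinite ν]
    {f : 𝓢 × 𝓣 → ℝ≥0∞} (hf : Measurable f) :
    ((μ.prod ν).withDensity f).map Prod.swap = (ν.prod μ).withDensity (f ∘ Prod.swap) := by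
  ext A hA
  rw [Measure.map_apply measurable_swap hA, withDensity_apply _ (hA.preimage measurable_swap),
    withDensity_apply _ hA]
  exact Measure.measurePreserving_swap.setLIntegral_comp_preimage hA (hf.comp measurable_swap)

variable {𝓤 : Type*} [MeasurableSpace 𝓤]

lemma ae_ae_lintegral_eq_one_of_compProd_map_fst (μ : Measure 𝓤) [IsFiniteMeasure μ]
    (κ : Kernel 𝓤 𝓢) [IsFiniteKernel κ] (η : Kernel 𝓤 𝓣) [IsSFiniteKernel η]
    (ρ : Kernel 𝓤 (𝓢 × 𝓣)) [IsSFiniteKernel ρ] {f : 𝓤 × 𝓢 × 𝓣 → ℝ≥0∞} (hf : Measurable f)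
    (hρ : ∀ᵐ u ∂μ, ρ u = ((κ u).prod (η u)).withDensity fun st => f (u, st.1, st.2))
    (hmarg : μ ⊗ₘ ρ.map Prod.fst = μ ⊗ₘ κ) :
    ∀ᵐ u ∂μ, ∀ᵐ s ∂κ u, ∫⁻ t, f (u, s, t) ∂η u = 1 := by
  set φ : 𝓤 × 𝓢 → ℝ≥0∞ := fun p => ∫⁻ t, f (p.1, p.2, t) ∂η p.1
  have hφ : Measurable φ :=
    Measurable.lintegral_kernel_prod_right' (κ := Kernel.prodMkRight 𝓢 η)
      (f := fun q : (𝓤 × 𝓢) × 𝓣 => f (q.1.1, q.1.2, q.2)) (by fun_prop)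
  refine Measure.ae_ae_of_ae_compProd (p := fun p => φ p = 1) ?_
  refine ae_eq_of_forall_setLIntegral_eq_of_sigmaFinite hφ measurable_one fun C hC _ => ?_
  rw [setLIntegral_one]
  calc ∫⁻ p in C, φ p ∂(μ ⊗ₘ κ) = ∫⁻ u, ∫⁻ s, C.indicator φ (u, s) ∂κ u ∂μ := by
        rw [← lintegral_indicator hC, Measure.lintegral_compProd (hφ.indicator hC)]
    _ = ∫⁻ u, ρ.map Prod.fst u (Prod.mk u ⁻¹' C) ∂μ := by
        refine lintegral_congr_ae (hρ.mono fun u hu => ?_)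
        have hCu : MeasurableSet (Prod.mk u ⁻¹' C) := measurable_prodMk_left hC
        dsimp only
        rw [Kernel.map_apply' _ measurable_fst _ hCu, hu,
          withDensity_apply _ (hCu.preimage measurable_fst), ← prod_univ,
          setLIntegral_prod _ (by fun_prop), ← lintegral_indicator hCu]
        simp only [Measure.restrict_univ]
        rfl
    _ = (μ ⊗ₘ κ) C := by rw [← hmarg, Measure.compProd_apply hC]

lemma ae_ae_lintegral_eq_one_of_compProd {μUST : Measure (𝓤 × 𝓢 × 𝓣)} {μU : Measure 𝓤}
    [IsFiniteMeasure μU] {κS : Kernel 𝓤 𝓢} [IsFiniteKernel κS] {κT : Kernel 𝓤 𝓣}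
    [IsFiniteKernel κT] {κST : Kernel 𝓤 (𝓢 × 𝓣)} [IsSFiniteKernel κST]
    (hS : μUST.map (fun p => (p.1, p.2.1)) = μU ⊗ₘ κS)
    (hT : μUST.map (fun p => (p.1, p.2.2)) = μU ⊗ₘ κT) (hST : μUST = μU ⊗ₘ κST)
    {f : 𝓤 × 𝓢 × 𝓣 → ℝ≥0∞} (hf : Measurable f)
    (hdens : ∀ᵐ u ∂μU, κST u = ((κS u).prod (κT u)).withDensity fun st => f (u, st.1, st.2)) :
    ∀ᵐ u ∂μU, (∀ᵐ s ∂κS u, ∫⁻ t, f (u, s, t) ∂κT u = 1)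
      ∧ ∀ᵐ t ∂κT u, ∫⁻ s, f (u, s, t) ∂κS u = 1 := by
  have hS' := ae_ae_lintegral_eq_one_of_compProd_map_fst μU κS κT κST hf hdens <| by
    rw [Measure.compProd_map measurable_fst, ← hST]
    exact hS
  have hT' := ae_ae_lintegral_eq_one_of_compProd_map_fst μU κT κS (κST.map Prod.swap)
    (f := fun p => f (p.1, p.2.2, p.2.1)) (by fun_prop)
    (hdens.mono fun u hu => by
      rw [Kernel.map_apply _ measurable_swap, hu, map_swap_withDensity_prod (by fun_prop)]
      congr 1) <| by
    rw [← Kernel.map_comp_right _ measurable_swap measurable_fst,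
      Measure.compProd_map (by fun_prop), ← hST]
    exact hT
  filter_upwards [hS', hT'] with u hSu hTu using ⟨hSu, hTu⟩

lemma compProd_apply_le_compProd_apply_add {α β : Type*} [MeasurableSpace α] [MeasurableSpace β]
    {μ : Measure 𝓤} [IsProbabilityMeasure μ] {κ : Kernel 𝓤 α} [IsSFiniteKernel κ]
    {η : Kernel 𝓤 β} [IsSFiniteKernel η] {A : Set (𝓤 × α)} {E : Set (𝓤 × β)}
    (hA : MeasurableSet A) (hE : MeasurableSet E) {r : ℝ≥0∞}
    (h : ∀ᵐ u ∂μ, κ u (Prod.mk u ⁻¹' A) ≤ η u (Prod.mk u ⁻¹' E) + r) :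
    (μ ⊗ₘ κ) A ≤ (μ ⊗ₘ η) E + r := by
  rw [Measure.compProd_apply hA, Measure.compProd_apply hE]
  calc _ ≤ ∫⁻ u, (η u (Prod.mk u ⁻¹' E) + r) ∂μ := lintegral_mono_ae h
    _ = _ := by rw [lintegral_add_right _ measurable_const]; simp

end MutualCovering

open MutualCovering in
theorem one_shot_conditional_mutual_covering_general
    {Ω 𝓤 𝓢 𝓣 : Type*} [MeasurableSpace Ω] [MeasurableSpace 𝓤]
    [MeasurableSpace 𝓢] [MeasurableSpace 𝓣]
    (P : Measure Ω)
    (μUST : Measure (𝓤 × 𝓢 × 𝓣)) [IsProbabilityMeasure μUST]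
    (μU : Measure 𝓤) [IsProbabilityMeasure μU]
    (κS : Kernel 𝓤 𝓢) [IsMarkovKernel κS]
    (κT : Kernel 𝓤 𝓣) [IsMarkovKernel κT]
    (κST : Kernel 𝓤 (𝓢 × 𝓣)) [IsMarkovKernel κST]
    (hS : μUST.map (fun p => (p.1, p.2.1)) = μU ⊗ₘ κS)
    (hT : μUST.map (fun p => (p.1, p.2.2)) = μU ⊗ₘ κT)
    (hST : μUST = μU ⊗ₘ κST)
    (iST : 𝓤 → 𝓢 → 𝓣 → ℝ) (hi : Measurable fun p : 𝓤 × 𝓢 × 𝓣 => iST p.1 p.2.1 p.2.2)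
    (hdens : ∀ᵐ u ∂μU,
      κST u = ((κS u).prod (κT u)).withDensity
        (fun st => ENNReal.ofReal (Real.exp (iST u st.1 st.2))))
    (M L : ℕ) (hM : 0 < M) (hL : 0 < L)
    (U : Ω → 𝓤) (S : Fin M → Ω → 𝓢) (T : Fin L → Ω → 𝓣)
    (hU : Measurable U) (hSm : ∀ m, Measurable (S m)) (hTl : ∀ l, Measurable (T l))
    (κMT : Kernel 𝓤 ((Fin M → 𝓢) × (Fin L → 𝓣)))
    (hκMT : ∀ u, κMT u = (Measure.pi fun _ : Fin M => κS u).prod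
        (Measure.pi fun _ : Fin L => κT u))
    (hlaw : P.map (fun ω => (U ω, ((fun m => S m ω), (fun l => T l ω)))) = μU ⊗ₘ κMT)
    (F : Set (𝓤 × 𝓢 × 𝓣)) (hF : MeasurableSet F)
    (γ : ℝ) (hγ : 0 < γ) :
    (P {ω | ∀ m l, (U ω, S m ω, T l ω) ∉ F}).toReal
      ≤ (μUST (Fᶜ ∪ {p | iST p.1 p.2.1 p.2.2 > Real.log ((M : ℝ) * (L : ℝ)) - 2 * γ})).toReal
        + (min (M : ℝ) (L : ℝ) - 1)
            / ((M : ℝ) * (L : ℝ) * (Real.exp (-γ) - Real.exp (-2 * γ)))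
        + Real.exp (-Real.exp γ) := by
  set r := (min (M : ℝ) (L : ℝ) - 1) / ((M : ℝ) * (L : ℝ) * (Real.exp (-γ) - Real.exp (-2 * γ)))
  have : IsMarkovKernel κMT := ⟨fun u => by rw [hκMT u]; infer_instance⟩
  have hmarg := ae_ae_lintegral_eq_one_of_compProd hS hT hST
    (f := fun p => ENNReal.ofReal (Real.exp (iST p.1 p.2.1 p.2.2))) (by fun_prop) hdens
  have hA : MeasurableSet
      {q : 𝓤 × (Fin M → 𝓢) × (Fin L → 𝓣) | ∀ m l, (q.1, q.2.1 m, q.2.2 l) ∉ F} := by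
    simp only [ofPred_forall]
    exact .iInter fun m => .iInter fun l => hF.compl.preimage (by fun_prop)
  have hP := compProd_apply_le_compProd_apply_add (μ := μU) (κ := κMT) (η := κST) hA
    (hF.compl.union (measurableSet_lt measurable_const hi))
    (r := ENNReal.ofReal r + ENNReal.ofReal (Real.exp (-Real.exp γ))) <| by
      filter_upwards [hdens, hmarg] with u hu ⟨h₁, h₂⟩
      rw [hκMT u, hu, ← add_assoc]
      exact one_shot_mutual_covering (by fun_prop) h₁ h₂ hM hL
        (hF.preimage (f := fun st : 𝓢 × 𝓣 => (u, st.1, st.2)) (by fun_prop)) hγ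
  rw [← hlaw, Measure.map_apply (by fun_prop) hA, ← hST] at hP
  have hr : 0 ≤ r := by
    have : Real.exp (-2 * γ) ≤ Real.exp (-γ) := Real.exp_le_exp.mpr (by linarith)
    have : (1 : ℝ) ≤ min (M : ℝ) L := le_min (by exact_mod_cast hM) (by exact_mod_cast hL)
    exact div_nonneg (by linarith) (by positivity)
  refine ENNReal.toReal_le_of_le_ofReal (by positivity) (hP.trans_eq ?_)
  rw [ENNReal.ofReal_add (by positivity) (by positivity), ENNReal.ofReal_add (by positivity) hr,
    ENNReal.ofReal_toReal (measure_ne_top _ _), add_assoc]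

/-- Conditional one-shot mutual covering lemma (Lemma 5). Given `U`, the `Sₘ` are
i.i.d. `P_{S|U}` and the `Tₗ` are i.i.d. `P_{T|U}`, conditionally independent given `U`;
`ı_{S;T|U}(s;t|u)` is the conditional information density, i.e. `exp ∘ iST u` is the
density of `P_{ST|U=u}` w.r.t. `P_{S|U=u} × P_{T|U=u}`. Then
`P[∩∩ {(U,Sₘ,Tₗ) ∉ F}] ≤ P[{(U,S,T) ∉ F} ∪ {ı > log(ML) - 2γ}]
  + (min{M,L}-1)/(ML(e^{-γ}-e^{-2γ})) + e^{-e^γ}`. -/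
theorem one_shot_conditional_mutual_covering
    {Ω 𝓤 𝓢 𝓣 : Type*} [MeasurableSpace Ω] [MeasurableSpace 𝓤]
    [MeasurableSpace 𝓢] [MeasurableSpace 𝓣]
    (P : Measure Ω) [IsProbabilityMeasure P]
    (μUST : Measure (𝓤 × 𝓢 × 𝓣)) [IsProbabilityMeasure μUST]
    (μU : Measure 𝓤) [IsProbabilityMeasure μU]
    (hμU : μUST.map (fun p => p.1) = μU)
    (κS : Kernel 𝓤 𝓢) [IsMarkovKernel κS]
    (κT : Kernel 𝓤 𝓣) [IsMarkovKernel κT]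
    (κST : Kernel 𝓤 (𝓢 × 𝓣)) [IsMarkovKernel κST]
    (hS : μUST.map (fun p => (p.1, p.2.1)) = μU ⊗ₘ κS)
    (hT : μUST.map (fun p => (p.1, p.2.2)) = μU ⊗ₘ κT)
    (hST : μUST = μU ⊗ₘ κST)
    (iST : 𝓤 → 𝓢 → 𝓣 → ℝ) (hi : Measurable fun p : 𝓤 × 𝓢 × 𝓣 => iST p.1 p.2.1 p.2.2)
    (hdens : ∀ᵐ u ∂μU,
      κST u = ((κS u).prod (κT u)).withDensity
        (fun st => ENNReal.ofReal (Real.exp (iST u st.1 st.2))))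
    (M L : ℕ) (hM : 0 < M) (hL : 0 < L)
    (U : Ω → 𝓤) (S : Fin M → Ω → 𝓢) (T : Fin L → Ω → 𝓣)
    (hU : Measurable U) (hSm : ∀ m, Measurable (S m)) (hTl : ∀ l, Measurable (T l))
    (κMT : Kernel 𝓤 ((Fin M → 𝓢) × (Fin L → 𝓣)))
    (hκMT : ∀ u, κMT u = (Measure.pi fun _ : Fin M => κS u).prod
        (Measure.pi fun _ : Fin L => κT u))
    (hlaw : P.map (fun ω => (U ω, ((fun m => S m ω), (fun l => T l ω)))) = μU ⊗ₘ κMT)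
    (F : Set (𝓤 × 𝓢 × 𝓣)) (hF : MeasurableSet F)
    (γ : ℝ) (hγ : 0 < γ) :
    (P {ω | ∀ m l, (U ω, S m ω, T l ω) ∉ F}).toReal
      ≤ (μUST (Fᶜ ∪ {p | iST p.1 p.2.1 p.2.2 > Real.log ((M : ℝ) * (L : ℝ)) - 2 * γ})).toReal
        + (min (M : ℝ) (L : ℝ) - 1)
            / ((M : ℝ) * (L : ℝ) * (Real.exp (-γ) - Real.exp (-2 * γ)))
        + Real.exp (-Real.exp γ) :=
  one_shot_conditional_mutual_covering_general P μUST μU κS κT κST hS hT hST iST hi hdens M L hM hL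
    U S T hU hSm hTl κMT hκMT hlaw F hF γ hγ
end

section
/- (One-shot mutual packing lemma.) Let P_X and P_Y be probability measures, and suppose X₁,…,X_M and Y₁,…,Y_N are random variables such that for every pair (m,n) the joint law of (X_m, Y_n) is the product P_X ⊗ P_Y (no independence across different pairs is assumed). Let ı_{X;Y}(x;y) = log(dP_{Y|X=x}/dP_Y)(y) be the information density associated to a fixed joint law P_{XY} with marginals P_X, P_Y. Then for any γ > 0: P[max_{m ≤ M, n ≤ N} ı_{X;Y}(X_m; Y_n) ≥ log(MN) + γ] ≤ exp(−γ). -/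
open MeasureTheory ProbabilityTheory
open scoped ENNReal

/-- One-shot mutual packing lemma: if each pair `(Xₘ, Yₙ)` has law `P_X ⊗ P_Y`
(no independence across pairs assumed), and `ı_{X;Y}` is the information density of
a joint law with these marginals (i.e. `exp ∘ i (x, ·)` is the density of `P_{Y|X=x}`
w.r.t. `P_Y`), then `P[maxₘₙ ı(Xₘ;Yₙ) ≥ log(MN) + γ] ≤ e^{-γ}`. -/
theorem one_shot_mutual_packing
    {Ω 𝓧 𝓨 : Type*} [MeasurableSpace Ω] [MeasurableSpace 𝓧] [MeasurableSpace 𝓨]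
    (P : Measure Ω) [IsProbabilityMeasure P]
    (μX : Measure 𝓧) (μY : Measure 𝓨)
    [IsProbabilityMeasure μX] [IsProbabilityMeasure μY]
    (M N : ℕ)
    (X : Fin M → Ω → 𝓧) (Y : Fin N → Ω → 𝓨)
    (hX : ∀ m, Measurable (X m)) (hY : ∀ n, Measurable (Y n))
    (hpair : ∀ m n, P.map (fun ω => (X m ω, Y n ω)) = μX.prod μY)
    (κ : Kernel 𝓧 𝓨) [IsMarkovKernel κ]
    (i : 𝓧 × 𝓨 → ℝ) (hi : Measurable i)
    (hdens : ∀ᵐ x ∂μX, κ x = μY.withDensity (fun y => ENNReal.ofReal (Real.exp (i (x, y)))))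
    (γ : ℝ) (hγ : 0 < γ) :
    (P {ω | ∃ m n, i (X m ω, Y n ω) ≥ Real.log ((M : ℝ) * (N : ℝ)) + γ}).toReal
      ≤ Real.exp (-γ) := by
  set τ : ℝ := Real.log ((M : ℝ) * (N : ℝ)) + γ with hτdef
  -- trivial cases
  rcases Nat.eq_zero_or_pos M with hM | hM
  · have : {ω | ∃ m n, i (X m ω, Y n ω) ≥ τ} = (∅ : Set Ω) := by
      ext ω; simp only [Set.mem_setOf_eq, Set.mem_empty_iff_false, iff_false]
      rintro ⟨m, -⟩; exact absurd m.2 (by omega)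
    rw [this]; simpa using (Real.exp_pos (-γ)).le
  rcases Nat.eq_zero_or_pos N with hN | hN
  · have : {ω | ∃ m n, i (X m ω, Y n ω) ≥ τ} = (∅ : Set Ω) := by
      ext ω; simp only [Set.mem_setOf_eq, Set.mem_empty_iff_false, iff_false]
      rintro ⟨-, n, -⟩; exact absurd n.2 (by omega)
    rw [this]; simpa using (Real.exp_pos (-γ)).le
  have hMN : (0:ℝ) < (M:ℝ) * (N:ℝ) := by positivity
  set S : Set (𝓧 × 𝓨) := i ⁻¹' Set.Ici τ with hSdef
  have hS : MeasurableSet S := hi measurableSet_Ici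
  -- key change-of-measure bound
  have key : (μX.prod μY) S ≤ ENNReal.ofReal (Real.exp (-τ)) := by
    rw [Measure.prod_apply hS]
    have h1 : ∀ᵐ x ∂μX, μY (Prod.mk x ⁻¹' S) ≤ ENNReal.ofReal (Real.exp (-τ)) := by
      filter_upwards [hdens] with x hx
      have hub : ENNReal.ofReal (Real.exp τ) * μY (Prod.mk x ⁻¹' S) ≤ 1 := by
        have hmeas : MeasurableSet (Prod.mk x ⁻¹' S) := measurable_prodMk_left hS
        calc ENNReal.ofReal (Real.exp τ) * μY (Prod.mk x ⁻¹' S)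
            = ∫⁻ y in Prod.mk x ⁻¹' S, ENNReal.ofReal (Real.exp τ) ∂μY := by
              rw [setLIntegral_const, mul_comm]
          _ ≤ ∫⁻ y in Prod.mk x ⁻¹' S, ENNReal.ofReal (Real.exp (i (x, y))) ∂μY := by
              refine setLIntegral_mono (by fun_prop) ?_
              intro y hy
              exact ENNReal.ofReal_le_ofReal (Real.exp_le_exp.mpr hy)
          _ ≤ ∫⁻ y, ENNReal.ofReal (Real.exp (i (x, y))) ∂μY :=
              setLIntegral_le_lintegral _ _
          _ = (μY.withDensity fun y => ENNReal.ofReal (Real.exp (i (x, y)))) Set.univ := by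
              rw [withDensity_apply _ MeasurableSet.univ, Measure.restrict_univ]
          _ = κ x Set.univ := by rw [hx]
          _ = 1 := measure_univ
      have h2 : μY (Prod.mk x ⁻¹' S) ≤ (ENNReal.ofReal (Real.exp τ))⁻¹ :=
        ENNReal.le_inv_iff_mul_le.mpr (by rwa [mul_comm])
      calc μY (Prod.mk x ⁻¹' S) ≤ (ENNReal.ofReal (Real.exp τ))⁻¹ := h2
        _ = ENNReal.ofReal (Real.exp (-τ)) := by
            rw [← ENNReal.ofReal_inv_of_pos (Real.exp_pos τ), ← Real.exp_neg]
    calc ∫⁻ x, μY (Prod.mk x ⁻¹' S) ∂μX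
        ≤ ∫⁻ _, ENNReal.ofReal (Real.exp (-τ)) ∂μX := lintegral_mono_ae h1
      _ = ENNReal.ofReal (Real.exp (-τ)) := by simp
  -- union bound
  have hpairmeas : ∀ m n, Measurable (fun ω => (X m ω, Y n ω)) :=
    fun m n => (hX m).prodMk (hY n)
  have hsingle : ∀ m n, P ((fun ω => (X m ω, Y n ω)) ⁻¹' S) ≤ ENNReal.ofReal (Real.exp (-τ)) := by
    intro m n
    rw [← Measure.map_apply (hpairmeas m n) hS, hpair m n]
    exact key
  have hevent : {ω | ∃ m n, i (X m ω, Y n ω) ≥ τ}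
      = ⋃ m, ⋃ n, (fun ω => (X m ω, Y n ω)) ⁻¹' S := by
    ext ω; simp [hSdef, ge_iff_le]
  have hbound : P {ω | ∃ m n, i (X m ω, Y n ω) ≥ τ}
      ≤ (M : ℝ≥0∞) * (N : ℝ≥0∞) * ENNReal.ofReal (Real.exp (-τ)) := by
    rw [hevent]
    calc P (⋃ m, ⋃ n, (fun ω => (X m ω, Y n ω)) ⁻¹' S)
        ≤ ∑' m : Fin M, P (⋃ n, (fun ω => (X m ω, Y n ω)) ⁻¹' S) := measure_iUnion_le _
      _ ≤ ∑' m : Fin M, ∑' n : Fin N, P ((fun ω => (X m ω, Y n ω)) ⁻¹' S) :=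
          ENNReal.tsum_le_tsum fun m => measure_iUnion_le _
      _ ≤ ∑' (_ : Fin M), ∑' (_ : Fin N), ENNReal.ofReal (Real.exp (-τ)) :=
          ENNReal.tsum_le_tsum fun m => ENNReal.tsum_le_tsum fun n => hsingle m n
      _ = (M : ℝ≥0∞) * (N : ℝ≥0∞) * ENNReal.ofReal (Real.exp (-τ)) := by
          simp [tsum_fintype, Finset.sum_const, mul_assoc]
  have hfin : (M : ℝ≥0∞) * (N : ℝ≥0∞) * ENNReal.ofReal (Real.exp (-τ)) ≠ ∞ := by
    finiteness
  calc (P {ω | ∃ m n, i (X m ω, Y n ω) ≥ τ}).toReal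
      ≤ ((M : ℝ≥0∞) * (N : ℝ≥0∞) * ENNReal.ofReal (Real.exp (-τ))).toReal :=
        ENNReal.toReal_mono hfin hbound
    _ = (M : ℝ) * (N : ℝ) * Real.exp (-τ) := by
        rw [ENNReal.toReal_mul, ENNReal.toReal_mul, ENNReal.toReal_ofReal (Real.exp_pos _).le]
        simp
    _ = Real.exp (-γ) := by
        rw [hτdef, neg_add, Real.exp_add, Real.exp_neg, Real.exp_log hMN]
        field_simp
end

section
/- (Change of measure over a random codebook.) Let P_{UV} = P_U ⊗ P_{V|U} with P_{V|U=u} ≪ P_V, let U₁,…,U_M be i.i.d. P_U, let Ṽ₁,…,Ṽ_M satisfy that the joint law of (U₁,…,U_M,Ṽ₁,…,Ṽ_M) is (P_{UV})^{⊗M} (i.e., Ṽ_m is coupled to U_m via P_{V|U}), and let Ṽ := Ṽ_W where W is uniform on {1,…,M} independent of everything. For a nonnegative measurable function π(u^M; v) satisfying π(u^M; v) ≤ 1{(1/M)Σ_m (dP_{V|U=u_m}/dP_V)(v) ≤ L·exp(−γ)} for all (u^M, v), and V₁ ∼ P_V independent of U^M: E[π(U^M; Ṽ) | U^M] ≤ L·exp(−γ)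 · E[π(U^M; V₁) | U^M] almost surely. -/
open MeasureTheory ProbabilityTheory
open scoped ENNReal

/-!
Given the codebook `u^M`, the law of `Ṽ` is the mixture `(1/M) ∑ₘ P_{V|U=uₘ}`, which has
density `ρ = (1/M) ∑ₘ dP_{V|U=uₘ}/dP_V` with respect to `P_V`. Integrating `π(u^M; ·)` against
this density, the integrand vanishes wherever `ρ > L e^{-γ}`, so `ρ` may be replaced by the
constant `L e^{-γ}`.
-/

namespace MeasureTheory

variable {α : Type*} [MeasurableSpace α] {μ : Measure α}

theorem withDensity_finset_sum {ι : Type*} (s : Finset ι) {f : ι → α → ℝ≥0∞}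
    (hf : ∀ i ∈ s, Measurable (f i)) :
    μ.withDensity (∑ i ∈ s, f i) = ∑ i ∈ s, μ.withDensity (f i) := by
  induction s using Finset.cons_induction with
  | empty => simp
  | cons i s hi ih =>
    rw [Finset.sum_cons, Finset.sum_cons, withDensity_add_left (hf i (s.mem_cons_self i)),
      ih fun j hj => hf j (Finset.mem_cons_of_mem hj)]

theorem lintegral_withDensity_le_mul_of_density_le {ρ : α → ℝ≥0∞} (hρ : Measurable ρ)
    {g : α → ℝ≥0∞} (hg : Measurable g) {c : ℝ≥0∞} (hρc : ∀ x, g x ≠ 0 → ρ x ≤ c) :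
    ∫⁻ x, g x ∂μ.withDensity ρ ≤ c * ∫⁻ x, g x ∂μ := by
  have hpointwise : ∀ x, (ρ * g) x ≤ c * g x := fun x => by
    by_cases hgx : g x = 0
    · simp [hgx]
    · exact mul_le_mul_left (hρc x hgx) _
  calc ∫⁻ x, g x ∂μ.withDensity ρ ≤ ∫⁻ x, (ρ * g) x ∂μ :=
        lintegral_withDensity_le_lintegral_mul μ hρ g
    _ ≤ ∫⁻ x, c * g x ∂μ := lintegral_mono hpointwise
    _ = c * ∫⁻ x, g x ∂μ := lintegral_const_mul c hg

theorem integral_withDensity_le_mul_of_density_le {ρ : α → ℝ≥0∞} (hρ : Measurable ρ)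
    {g : α → ℝ} (hg : Measurable g) (hg0 : 0 ≤ g) (hgi : Integrable g μ) {c : ℝ} (hc : 0 ≤ c)
    (hρc : ∀ x, g x ≠ 0 → ρ x ≤ ENNReal.ofReal c) :
    ∫ x, g x ∂μ.withDensity ρ ≤ c * ∫ x, g x ∂μ := by
  have hlint : ∫⁻ x, ENNReal.ofReal (g x) ∂μ.withDensity ρ
      ≤ ENNReal.ofReal c * ∫⁻ x, ENNReal.ofReal (g x) ∂μ :=
    lintegral_withDensity_le_mul_of_density_le hρ hg.ennreal_ofReal fun x hx =>
      hρc x fun hgx => hx (by simp [hgx])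
  rw [integral_eq_lintegral_of_nonneg_ae (ae_of_all _ hg0) hg.aestronglyMeasurable,
    integral_eq_lintegral_of_nonneg_ae (ae_of_all _ hg0) hg.aestronglyMeasurable]
  calc (∫⁻ x, ENNReal.ofReal (g x) ∂μ.withDensity ρ).toReal
      ≤ (ENNReal.ofReal c * ∫⁻ x, ENNReal.ofReal (g x) ∂μ).toReal :=
        ENNReal.toReal_mono (ENNReal.mul_ne_top ENNReal.ofReal_ne_top hgi.lintegral_lt_top.ne)
          hlint
    _ = c * (∫⁻ x, ENNReal.ofReal (g x) ∂μ).toReal := by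
        rw [ENNReal.toReal_mul, ENNReal.toReal_ofReal hc]

end MeasureTheory

theorem change_of_measure_random_codebook_general
    {𝓤 𝓥 : Type*} [MeasurableSpace 𝓤] [MeasurableSpace 𝓥]
    (μV : Measure 𝓥) [IsProbabilityMeasure μV]
    (κ : Kernel 𝓤 𝓥)
    (f : 𝓤 → 𝓥 → ℝ≥0∞) (hfm : ∀ u, Measurable (f u))
    (hκ : ∀ u, κ u = μV.withDensity (f u))
    (M : ℕ) (L γ : ℝ) (hL : 0 < L)
    (π : (Fin M → 𝓤) → 𝓥 → ℝ)
    (hπm : ∀ uM, Measurable (π uM)) (hπ0 : ∀ uM v, 0 ≤ π uM v)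
    (hπ : ∀ uM v, π uM v ≤
      if ((M : ℝ≥0∞))⁻¹ * ∑ m, f (uM m) v ≤ ENNReal.ofReal (L * Real.exp (-γ))
      then 1 else 0)
    (uM : Fin M → 𝓤) :
    ∫ v, π uM v ∂(((M : ℝ≥0∞))⁻¹ • ∑ m, κ (uM m))
      ≤ L * Real.exp (-γ) * ∫ v, π uM v ∂μV := by
  have hsum : Measurable (∑ m, f (uM m)) := by
    simpa only [← Finset.sum_apply] using Finset.measurable_sum _ fun m _ => hfm (uM m)
  have hmixture : ((M : ℝ≥0∞))⁻¹ • ∑ m, κ (uM m)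
      = μV.withDensity (((M : ℝ≥0∞))⁻¹ • ∑ m, f (uM m)) := by
    simp_rw [hκ]
    rw [← withDensity_finset_sum _ fun m _ => hfm (uM m),
      withDensity_smul _ hsum]
  have hπ_le_one : ∀ v, ‖π uM v‖ ≤ 1 := fun v => by
    rw [Real.norm_of_nonneg (hπ0 uM v)]
    exact (hπ uM v).trans (by split_ifs <;> norm_num)
  rw [hmixture]
  refine integral_withDensity_le_mul_of_density_le (hsum.const_smul _) (hπm uM) (hπ0 uM)
    (Integrable.of_bound (hπm uM).aestronglyMeasurable 1 (ae_of_all _ hπ_le_one))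
    (by positivity) fun v hv => ?_
  simp only [Pi.smul_apply, Finset.sum_apply, smul_eq_mul]
  by_contra hρv
  have hπv := hπ uM v
  rw [if_neg hρv] at hπv
  exact hv (le_antisymm hπv (hπ0 uM v))

/-- Change of measure over a random codebook (steps (13)–(14)). Given `u^M`, the
auxiliary variable `Ṽ` has law `(1/M) ∑ₘ P_{V|U=uₘ}` and `V₁` has law `P_V`. If the
nonnegative function `π(u^M; ·)` vanishes outside
`{v : (1/M) ∑ₘ (dP_{V|U=uₘ}/dP_V)(v) ≤ L e^{-γ}}`, then
`E[π(u^M; Ṽ)] ≤ L e^{-γ} E[π(u^M; V₁)]`. -/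
theorem change_of_measure_random_codebook
    {𝓤 𝓥 : Type*} [MeasurableSpace 𝓤] [MeasurableSpace 𝓥]
    (μV : Measure 𝓥) [IsProbabilityMeasure μV]
    (κ : Kernel 𝓤 𝓥) [IsMarkovKernel κ]
    (f : 𝓤 → 𝓥 → ℝ≥0∞) (hfm : ∀ u, Measurable (f u))
    (hκ : ∀ u, κ u = μV.withDensity (f u))
    (M : ℕ) (hM : 0 < M) (L γ : ℝ) (hL : 0 < L) (hγ : 0 < γ)
    (π : (Fin M → 𝓤) → 𝓥 → ℝ)
    (hπm : ∀ uM, Measurable (π uM)) (hπ0 : ∀ uM v, 0 ≤ π uM v)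
    (hπ : ∀ uM v, π uM v ≤
      if ((M : ℝ≥0∞))⁻¹ * ∑ m, f (uM m) v ≤ ENNReal.ofReal (L * Real.exp (-γ))
      then 1 else 0)
    (uM : Fin M → 𝓤) :
    ∫ v, π uM v ∂(((M : ℝ≥0∞))⁻¹ • ∑ m, κ (uM m))
      ≤ L * Real.exp (-γ) * ∫ v, π uM v ∂μV :=
  change_of_measure_random_codebook_general μV κ f hfm hκ M L γ hL π hπm hπ0 hπ uM
end

section
/- Let P be a probability measure on X, A ⊆ X measurable, and V₁,…,V_L i.i.d. with law P. If p ∈ [0,1] and λ > 0 satisfy p ≤ λ·P(A) and p·(L/λ)/L ≤ 1, then P[∩_{l=1}^{L} {V_l ∉ A}] = (1 − P(A))^L ≤ 1 − p + exp(−L/λ). -/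
open MeasureTheory

/-!
Independence turns the probability that no `Vₗ` hits `A` into `(1 - P(A))^L`. Since
`P(A) ≥ p/λ`, this is at most `(1 - p/λ)^L ≤ e^{-pL/λ}`, and convexity of `exp` between
`0` and `-L/λ` bounds `e^{-p L/λ}` by `1 - p + p e^{-L/λ} ≤ 1 - p + e^{-L/λ}`.
-/

theorem measure_forall_mem_eq_prod_of_map_eq_pi {Ω ι : Type*} [Fintype ι] {X : ι → Type*}
    [MeasurableSpace Ω] [∀ i, MeasurableSpace (X i)] {Pr : Measure Ω}
    {μ : ∀ i, Measure (X i)} [∀ i, SigmaFinite (μ i)]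
    {V : ∀ i, Ω → X i} (hV : ∀ i, Measurable (V i))
    (hlaw : Pr.map (fun ω i => V i ω) = Measure.pi μ)
    {s : ∀ i, Set (X i)} (hs : ∀ i, MeasurableSet (s i)) :
    Pr {ω | ∀ i, V i ω ∈ s i} = ∏ i, μ i (s i) := by
  have hpre : {ω | ∀ i, V i ω ∈ s i} = (fun ω i => V i ω) ⁻¹' Set.univ.pi s := by
    ext ω; simp
  rw [hpre, ← Measure.map_apply (measurable_pi_lambda _ hV) (.univ_pi hs), hlaw,
    Measure.pi_pi]

namespace Real

theorem exp_neg_mul_le_one_sub_add_exp_neg {p : ℝ} (hp0 : 0 ≤ p) (hp1 : p ≤ 1) (α : ℝ) :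
    exp (-(p * α)) ≤ 1 - p + exp (-α) := by
  have hconv : exp ((1 - p) • (0 : ℝ) + p • (-α)) ≤ (1 - p) • exp 0 + p • exp (-α) :=
    convexOn_exp.2 (Set.mem_univ _) (Set.mem_univ _) (by linarith) hp0 (by ring)
  simp only [smul_eq_mul, mul_zero, zero_add, exp_zero, mul_one, mul_neg] at hconv
  nlinarith [exp_pos (-α)]

theorem one_sub_pow_le_exp_neg_mul {x : ℝ} (hx : x ≤ 1) (n : ℕ) :
    (1 - x) ^ n ≤ exp (-(n * x)) := by
  calc (1 - x) ^ n ≤ exp (-x) ^ n :=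
        pow_le_pow_left₀ (by linarith) (one_sub_le_exp_neg x) n
    _ = exp (-(n * x)) := by rw [← exp_nat_mul]; ring_nf

end Real

theorem covering_probability_bound_general
    {Ω X : Type*} [MeasurableSpace Ω] [MeasurableSpace X]
    (Pr : Measure Ω) [IsProbabilityMeasure Pr]
    (μ : Measure X) [IsProbabilityMeasure μ]
    (L : ℕ) (V : Fin L → Ω → X) (hV : ∀ l, Measurable (V l))
    (hlaw : Pr.map (fun ω => fun l => V l ω) = Measure.pi (fun _ : Fin L => μ))
    (A : Set X) (hA : MeasurableSet A)
    (p lam : ℝ) (hp0 : 0 ≤ p) (hp1 : p ≤ 1) (hlam : 0 < lam)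
    (hpA : p ≤ lam * (μ A).toReal) :
    (Pr {ω | ∀ l, V l ω ∉ A}).toReal = (1 - (μ A).toReal) ^ L ∧
    (1 - (μ A).toReal) ^ L ≤ 1 - p + Real.exp (-(L : ℝ) / lam) := by
  have hA_le : (μ A).toReal ≤ 1 := measureReal_le_one
  have hp_div : p / lam ≤ (μ A).toReal := (div_le_iff₀' hlam).2 hpA
  refine ⟨?_, ?_⟩
  · have hmiss := measure_forall_mem_eq_prod_of_map_eq_pi hV hlaw fun _ => hA.compl
    simp only [Set.mem_compl_iff] at hmiss
    rw [hmiss, Finset.prod_const, Finset.card_univ, Fintype.card_fin, prob_compl_eq_one_sub hA,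
      ENNReal.toReal_pow, ENNReal.toReal_sub_of_le prob_le_one ENNReal.one_ne_top,
      ENNReal.toReal_one]
  · calc (1 - (μ A).toReal) ^ L ≤ (1 - p / lam) ^ L :=
          pow_le_pow_left₀ (by linarith) (by linarith) L
      _ ≤ Real.exp (-(p * (L / lam))) := by
          convert Real.one_sub_pow_le_exp_neg_mul (hp_div.trans hA_le) L using 3; ring
      _ ≤ 1 - p + Real.exp (-(L : ℝ) / lam) := by
          rw [neg_div]; exact Real.exp_neg_mul_le_one_sub_add_exp_neg hp0 hp1 _

/-- Steps (47)–(48): if `V₁,…,V_L` are i.i.d. with law `P`, `p ∈ [0,1]`, `λ > 0`,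
`p ≤ λ P(A)` and `p (L/λ)/L ≤ 1`, then
`P[∩ₗ {Vₗ ∉ A}] = (1 - P(A))^L ≤ 1 - p + e^{-L/λ}`. -/
theorem covering_probability_bound
    {Ω X : Type*} [MeasurableSpace Ω] [MeasurableSpace X]
    (Pr : Measure Ω) [IsProbabilityMeasure Pr]
    (μ : Measure X) [IsProbabilityMeasure μ]
    (L : ℕ) (V : Fin L → Ω → X) (hV : ∀ l, Measurable (V l))
    (hlaw : Pr.map (fun ω => fun l => V l ω) = Measure.pi (fun _ : Fin L => μ))
    (A : Set X) (hA : MeasurableSet A)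
    (p lam : ℝ) (hp0 : 0 ≤ p) (hp1 : p ≤ 1) (hlam : 0 < lam)
    (hpA : p ≤ lam * (μ A).toReal)
    (hnorm : p * ((L : ℝ) / lam) / (L : ℝ) ≤ 1) :
    (Pr {ω | ∀ l, V l ω ∉ A}).toReal = (1 - (μ A).toReal) ^ L ∧
    (1 - (μ A).toReal) ^ L ≤ 1 - p + Real.exp (-(L : ℝ) / lam) :=
  covering_probability_bound_general Pr μ L V hV hlaw A hA p lam hp0 hp1 hlam hpA
end
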